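/- arXiv:1104.0338 — 4 statements merged into one kernel-verified Lean document; each statement's English description precedes it below -/
import Mathlib

section
/- Let F be a distribution function on the reals in the class AEP(b, C) with b > 0 and C > 0, meaning that x^{-b} log(1 - F(x)) → -C as x → ∞. If X_1, ..., X_n are i.i.d. with distribution F, then max(X_1, ..., X_n) / (log n)^{1/b} converges to C^{-1/b} in probability as n → ∞. -/
open MeasureTheory Filter Set

/-- Survival function of a measure on ℝ. -/
noncomputable def survival (ν : Measure ℝ) (x : ℝ) : ℝ := (ν (Set.Ioi x)).toReal

/-- F ∈ AEP(b, C): x^{-b} log F̄(x) → -C as x → ∞. -/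
def MemAEP (ν : Measure ℝ) (b C : ℝ) : Prop :=
  Tendsto (fun x : ℝ => Real.log (survival ν x) / x ^ b) atTop (nhds (-C))

/-- Moment-generating function, with value in ℝ≥0∞. -/
noncomputable def mgf' (ν : Measure ℝ) (θ : ℝ) : ENNReal :=
  ∫⁻ x, ENNReal.ofReal (Real.exp (θ * x)) ∂ν

/-- Logarithmic moment-generating function Λ(θ) = log ∫ e^{θx} dν. -/
noncomputable def cgf' (ν : Measure ℝ) (θ : ℝ) : ℝ := Real.log (mgf' ν θ).toReal

/-- Rate function Λ*(x) = sup_{θ ≥ 0} (θx - Λ(θ)). -/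
noncomputable def rateFn (ν : Measure ℝ) (x : ℝ) : ℝ :=
  sSup {y | ∃ θ : ℝ, 0 ≤ θ ∧ y = θ * x - cgf' ν θ}

/-- Rate function with values in ℝ≥0∞, the supremum being restricted to the
effective domain of Λ. -/
noncomputable def rateFnE (ν : Measure ℝ) (x : ℝ) : ENNReal :=
  ⨆ θ : {θ : ℝ // 0 ≤ θ ∧ mgf' ν θ < ⊤}, ENNReal.ofReal (θ * x - cgf' ν θ)

/-!
Write `a n = (log n) ^ (1 / b)` and `t = C ^ (-1 / b)`. The AEP condition says that
`F̄ (k a n) = n ^ (-C k ^ b + o(1))`. For `k > t` the union bound gives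
`P (M n > k a n) ≤ n F̄ (k a n) → 0`; for `0 < k < t` independence gives
`P (M n ≤ k a n) = (1 - F̄ (k a n)) ^ n ≤ exp (-n F̄ (k a n)) → 0`, as `n F̄ (k a n) → ∞`.
-/

open Real Topology

namespace Real

lemma le_biSup_finset {ι : Type*} {f : ι → ℝ} {s : Finset ι} {i : ι} (hi : i ∈ s) :
    f i ≤ ⨆ j ∈ s, f j :=
  le_ciSup₂ (f := fun j (_ : j ∈ s) => f j)
    ((s.finite_toSet.image f).bddAbove.mono <| by
      rintro _ ⟨_, ⟨j, rfl⟩, hj, rfl⟩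
      exact ⟨j, hj, rfl⟩) i hi

-- Indices outside `s` contribute the junk value `sSup ∅ = 0`, hence `0 ≤ u`.
lemma biSup_finset_le {ι : Type*} {f : ι → ℝ} {s : Finset ι} {u : ℝ} (hu : 0 ≤ u)
    (h : ∀ i ∈ s, f i ≤ u) : ⨆ i ∈ s, f i ≤ u :=
  Real.iSup_le (fun i => Real.iSup_le (h i) hu) hu

lemma lt_mul_or_le_mul_of_lt_abs_div_sub {M a t ε : ℝ} (ha : 0 < a)
    (h : ε < |M / a - t|) : (t + ε) * a < M ∨ M ≤ (t - ε) * a := by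
  rcases lt_abs.mp h with h | h
  · exact Or.inl (by rw [← lt_div_iff₀ ha]; linarith)
  · exact Or.inr (by rw [← div_le_iff₀ ha]; linarith)

lemma mul_log_rpow_one_div_rpow {b k : ℝ} (hb : b ≠ 0) (hk : 0 ≤ k) (n : ℕ) :
    (k * log n ^ (1 / b)) ^ b = k ^ b * log n := by
  rw [mul_rpow hk (rpow_nonneg (log_natCast_nonneg n) _), ← rpow_mul (log_natCast_nonneg n),
    one_div_mul_cancel hb, rpow_one]

lemma natCast_mul_exp_neg_mul_log {n : ℕ} (hn : n ≠ 0) (α : ℝ) :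
    n * exp (-(α * log n)) = exp ((1 - α) * log n) := by
  rw [show (1 - α) * log n = log n + -(α * log n) by ring, exp_add,
    exp_log (Nat.cast_pos.mpr (Nat.pos_of_ne_zero hn))]

lemma tendsto_natCast_mul_exp_neg_mul_log_nhds_zero {α : ℝ} (hα : 1 < α) :
    Tendsto (fun n : ℕ => n * exp (-(α * log n))) atTop (𝓝 0) := by
  refine (tendsto_exp_atBot.comp ((tendsto_const_mul_atBot_of_neg (by linarith : 1 - α < 0)).mpr
    (tendsto_log_atTop.comp tendsto_natCast_atTop_atTop))).congr' ?_
  filter_upwards [eventually_ne_atTop 0] with n hn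
  exact (natCast_mul_exp_neg_mul_log hn α).symm

lemma tendsto_natCast_mul_exp_neg_mul_log_atTop {α : ℝ} (hα : α < 1) :
    Tendsto (fun n : ℕ => n * exp (-(α * log n))) atTop atTop := by
  refine (tendsto_exp_atTop.comp ((tendsto_log_atTop.comp
    tendsto_natCast_atTop_atTop).const_mul_atTop (by linarith : 0 < 1 - α))).congr' ?_
  filter_upwards [eventually_ne_atTop 0] with n hn
  exact (natCast_mul_exp_neg_mul_log hn α).symm

lemma tendsto_mul_log_rpow_atTop {b : ℝ} (hb : 0 < b) {k : ℝ} (hk : 0 < k) :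
    Tendsto (fun n : ℕ => k * log n ^ (1 / b)) atTop atTop :=
  ((tendsto_rpow_atTop (by positivity)).comp
    (tendsto_log_atTop.comp tendsto_natCast_atTop_atTop)).const_mul_atTop hk

end Real

section Survival

variable {ν : Measure ℝ}

lemma survival_nonneg (x : ℝ) : 0 ≤ survival ν x := ENNReal.toReal_nonneg

lemma ofReal_survival [IsFiniteMeasure ν] (x : ℝ) :
    ENNReal.ofReal (survival ν x) = ν (Ioi x) :=
  ENNReal.ofReal_toReal (measure_ne_top ν _)

lemma measure_Iic_eq_ofReal_one_sub_survival [IsProbabilityMeasure ν] (x : ℝ) :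
    ν (Iic x) = ENNReal.ofReal (1 - survival ν x) := by
  rw [ENNReal.ofReal_sub _ (survival_nonneg x), ENNReal.ofReal_one, ofReal_survival,
    ← compl_Ioi, prob_compl_eq_one_sub measurableSet_Ioi]

lemma survival_le_one [IsProbabilityMeasure ν] (x : ℝ) : survival ν x ≤ 1 :=
  ENNReal.toReal_le_of_le_ofReal zero_le_one (by simpa using prob_le_one)

namespace MemAEP

variable {b C : ℝ}

lemma eventually_survival_le_exp (h : MemAEP ν b C) {c : ℝ} (hc : c < C) :
    ∀ᶠ x in atTop, survival ν x ≤ exp (-(c * x ^ b)) := by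
  filter_upwards [h.eventually (gt_mem_nhds (neg_lt_neg hc)), eventually_gt_atTop 0]
    with x hlog hx
  have hlog' : log (survival ν x) < -(c * x ^ b) := by
    rw [div_lt_iff₀ (rpow_pos_of_pos hx b)] at hlog
    linarith
  exact (le_exp_log _).trans (exp_le_exp.mpr hlog'.le)

lemma eventually_exp_le_survival (h : MemAEP ν b C) (hC : 0 < C) {c : ℝ} (hc : C < c) :
    ∀ᶠ x in atTop, exp (-(c * x ^ b)) ≤ survival ν x := by
  filter_upwards [h.eventually (lt_mem_nhds (neg_lt_neg hc)),
    h.eventually (gt_mem_nhds (neg_lt_zero.mpr hC)), eventually_gt_atTop 0]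
    with x hlog hneg hx
  -- a vanishing survival function would make the quotient `0`, not close to `-C`
  have hpos : 0 < survival ν x := by
    refine (survival_nonneg x).lt_of_ne fun h0 => ?_
    rw [← h0, log_zero, zero_div] at hneg
    exact lt_irrefl 0 hneg
  have hlog' : -(c * x ^ b) < log (survival ν x) := by
    rw [lt_div_iff₀ (rpow_pos_of_pos hx b)] at hlog
    linarith
  exact (exp_le_exp.mpr hlog'.le).trans_eq (exp_log hpos)

lemma tendsto_natCast_mul_survival_nhds_zero (h : MemAEP ν b C) (hb : 0 < b) {k : ℝ}
    (hk : 0 < k) (hCk : 1 < C * k ^ b) :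
    Tendsto (fun n : ℕ => n * survival ν (k * log n ^ (1 / b))) atTop (𝓝 0) := by
  have hkb : 0 < k ^ b := rpow_pos_of_pos hk b
  obtain ⟨c, hc1, hcC⟩ := exists_between ((div_lt_iff₀ hkb).mpr (by linarith : 1 < C * k ^ b))
  have hck : 1 < c * k ^ b := (div_lt_iff₀ hkb).mp hc1
  refine tendsto_of_tendsto_of_tendsto_of_le_of_le' tendsto_const_nhds
    (tendsto_natCast_mul_exp_neg_mul_log_nhds_zero hck)
    (Eventually.of_forall fun n => mul_nonneg n.cast_nonneg (survival_nonneg _)) ?_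
  filter_upwards [(tendsto_mul_log_rpow_atTop hb hk).eventually
    (h.eventually_survival_le_exp hcC)] with n hn
  rw [mul_log_rpow_one_div_rpow hb.ne' hk.le, ← mul_assoc] at hn
  exact mul_le_mul_of_nonneg_left hn n.cast_nonneg

lemma tendsto_natCast_mul_survival_atTop (h : MemAEP ν b C) (hb : 0 < b) (hC : 0 < C)
    {k : ℝ} (hk : 0 < k) (hCk : C * k ^ b < 1) :
    Tendsto (fun n : ℕ => n * survival ν (k * log n ^ (1 / b))) atTop atTop := by
  have hkb : 0 < k ^ b := rpow_pos_of_pos hk b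
  obtain ⟨c, hCc, hc1⟩ := exists_between ((lt_div_iff₀ hkb).mpr (by linarith : C * k ^ b < 1))
  have hck : c * k ^ b < 1 := (lt_div_iff₀ hkb).mp hc1
  refine tendsto_atTop_mono' atTop ?_ (tendsto_natCast_mul_exp_neg_mul_log_atTop hck)
  filter_upwards [(tendsto_mul_log_rpow_atTop hb hk).eventually
    (h.eventually_exp_le_survival hC hCc)] with n hn
  rw [mul_log_rpow_one_div_rpow hb.ne' hk.le, ← mul_assoc] at hn
  exact mul_le_mul_of_nonneg_left hn n.cast_nonneg

end MemAEP

end Survival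

section SampleMaximum

variable {Ω : Type*} [MeasurableSpace Ω] {μ : Measure Ω} {ν : Measure ℝ} {X : ℕ → Ω → ℝ}

lemma measure_lt_biSup_le (hmeas : ∀ i, Measurable (X i)) (hdist : ∀ i, μ.map (X i) = ν)
    {u : ℝ} (hu : 0 ≤ u) (n : ℕ) :
    μ {ω | u < ⨆ i ∈ Finset.range n, X i ω} ≤ n * ν (Ioi u) :=
  calc μ {ω | u < ⨆ i ∈ Finset.range n, X i ω}
      ≤ μ (⋃ i ∈ Finset.range n, X i ⁻¹' Ioi u) := measure_mono fun ω hω => by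
        by_contra hnot
        simp only [mem_iUnion, mem_preimage, mem_Ioi, not_exists, not_lt] at hnot
        exact (Real.biSup_finset_le hu hnot).not_gt hω
    _ ≤ ∑ i ∈ Finset.range n, μ (X i ⁻¹' Ioi u) := measure_biUnion_finset_le _ _
    _ = n * ν (Ioi u) := by
        simp [← Measure.map_apply (hmeas _) measurableSet_Ioi, hdist]

lemma measure_biSup_le_le (hmeas : ∀ i, Measurable (X i)) (hdist : ∀ i, μ.map (X i) = ν)
    (hindep : ProbabilityTheory.iIndepFun X μ) (s : ℝ) (n : ℕ) :
    μ {ω | (⨆ i ∈ Finset.range n, X i ω) ≤ s} ≤ ν (Iic s) ^ n :=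
  calc μ {ω | (⨆ i ∈ Finset.range n, X i ω) ≤ s}
      ≤ μ (⋂ i ∈ Finset.range n, X i ⁻¹' Iic s) := measure_mono fun ω hω => by
        simp only [mem_iInter, mem_preimage, mem_Iic]
        exact fun i hi => (Real.le_biSup_finset hi).trans hω
    _ = ∏ i ∈ Finset.range n, μ (X i ⁻¹' Iic s) :=
        hindep.measure_inter_preimage_eq_mul _ fun _ _ => measurableSet_Iic
    _ = ν (Iic s) ^ n := by
        simp [← Measure.map_apply (hmeas _) measurableSet_Iic, hdist]

lemma tendsto_measure_lt_biSup_of_tendsto_natCast_mul_survival [IsFiniteMeasure ν]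
    (hmeas : ∀ i, Measurable (X i)) (hdist : ∀ i, μ.map (X i) = ν) {x : ℕ → ℝ}
    (hx : ∀ n, 0 ≤ x n) (h : Tendsto (fun n : ℕ => n * survival ν (x n)) atTop (𝓝 0)) :
    Tendsto (fun n => μ {ω | x n < ⨆ i ∈ Finset.range n, X i ω}) atTop (𝓝 0) := by
  have hbound : Tendsto (fun n : ℕ => ENNReal.ofReal (n * survival ν (x n))) atTop (𝓝 0) := by
    simpa using ENNReal.tendsto_ofReal h
  refine tendsto_of_tendsto_of_tendsto_of_le_of_le tendsto_const_nhds hbound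
    (fun n => zero_le) fun n => (measure_lt_biSup_le hmeas hdist (hx n) n).trans_eq ?_
  rw [ENNReal.ofReal_mul n.cast_nonneg, ofReal_survival, ENNReal.ofReal_natCast]

lemma tendsto_measure_biSup_le_of_tendsto_natCast_mul_survival [IsProbabilityMeasure ν]
    (hmeas : ∀ i, Measurable (X i)) (hdist : ∀ i, μ.map (X i) = ν)
    (hindep : ProbabilityTheory.iIndepFun X μ) {x : ℕ → ℝ}
    (h : Tendsto (fun n : ℕ => n * survival ν (x n)) atTop atTop) :
    Tendsto (fun n => μ {ω | (⨆ i ∈ Finset.range n, X i ω) ≤ x n}) atTop (𝓝 0) := by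
  have hbound : Tendsto (fun n : ℕ => ENNReal.ofReal (exp (-(n * survival ν (x n)))))
      atTop (𝓝 0) := by
    simpa using ENNReal.tendsto_ofReal (tendsto_exp_atBot.comp (tendsto_neg_atTop_atBot.comp h))
  refine tendsto_of_tendsto_of_tendsto_of_le_of_le tendsto_const_nhds hbound
    (fun n => zero_le) fun n => (measure_biSup_le_le hmeas hdist hindep (x n) n).trans ?_
  have hp : 0 ≤ 1 - survival ν (x n) := sub_nonneg.mpr (survival_le_one _)
  rw [measure_Iic_eq_ofReal_one_sub_survival, ← ENNReal.ofReal_pow hp]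
  refine ENNReal.ofReal_le_ofReal ?_
  calc (1 - survival ν (x n)) ^ n ≤ exp (-survival ν (x n)) ^ n :=
        pow_le_pow_left₀ hp (one_sub_le_exp_neg _) n
    _ = exp (-(n * survival ν (x n))) := by rw [← exp_nat_mul, mul_neg]

end SampleMaximum

lemma tendsto_measure_lt_abs_biSup_div_log_rpow_sub {ν : Measure ℝ} [IsProbabilityMeasure ν]
    {b C : ℝ} (hb : 0 < b) (hC : 0 < C) (hAEP : MemAEP ν b C)
    {Ω : Type*} [MeasurableSpace Ω] {μ : Measure Ω} {X : ℕ → Ω → ℝ}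
    (hmeas : ∀ i, Measurable (X i)) (hdist : ∀ i, μ.map (X i) = ν)
    (hindep : ProbabilityTheory.iIndepFun X μ) {t ε : ℝ} (ht : C * t ^ b = 1)
    (hε : 0 < ε) (hεt : ε < t) :
    Tendsto (fun n : ℕ =>
      μ {ω | ε < |(⨆ i ∈ Finset.range n, X i ω) / log n ^ (1 / b) - t|}) atTop (𝓝 0) := by
  have hupper := tendsto_measure_lt_biSup_of_tendsto_natCast_mul_survival hmeas hdist
    (fun n => mul_nonneg (by linarith) (rpow_nonneg (log_natCast_nonneg n) _))
    (hAEP.tendsto_natCast_mul_survival_nhds_zero hb (k := t + ε) (by linarith)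
      (ht ▸ mul_lt_mul_of_pos_left (rpow_lt_rpow (by linarith) (by linarith) hb) hC))
  have hlower := tendsto_measure_biSup_le_of_tendsto_natCast_mul_survival hmeas hdist hindep
    (hAEP.tendsto_natCast_mul_survival_atTop hb hC (k := t - ε) (by linarith)
      (ht ▸ mul_lt_mul_of_pos_left (rpow_lt_rpow (by linarith) (by linarith) hb) hC))
  refine tendsto_of_tendsto_of_tendsto_of_le_of_le' tendsto_const_nhds
    (by simpa only [add_zero] using hupper.add hlower) (Eventually.of_forall fun n => zero_le) ?_
  filter_upwards [eventually_gt_atTop 1] with n hn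
  have ha : 0 < log n ^ (1 / b) := rpow_pos_of_pos (log_pos (by exact_mod_cast hn)) _
  refine (measure_mono fun ω hω => ?_).trans (measure_union_le _ _)
  exact lt_mul_or_le_mul_of_lt_abs_div_sub ha hω

theorem stmt0_general (ν : Measure ℝ) (hν : IsProbabilityMeasure ν)
    (b C : ℝ) (hb : 0 < b) (hC : 0 < C) (hAEP : MemAEP ν b C)
    {Ω : Type*} [MeasurableSpace Ω] (μ : Measure Ω)
    (X : ℕ → Ω → ℝ) (hmeas : ∀ i, Measurable (X i))
    (hdist : ∀ i, μ.map (X i) = ν)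
    (hindep : ProbabilityTheory.iIndepFun X μ) :
    ∀ ε > 0, Tendsto (fun n : ℕ =>
      μ {ω | ε < |(⨆ i ∈ Finset.range n, X i ω) / (Real.log n) ^ (1 / b)
                    - C ^ (-(1 / b))|})
      atTop (nhds 0) := by
  intro ε hε
  have ht : 0 < C ^ (-(1 / b)) := rpow_pos_of_pos hC _
  have hCt : C * (C ^ (-(1 / b))) ^ b = 1 := by
    rw [← rpow_mul hC.le, neg_mul, one_div_mul_cancel hb.ne', rpow_neg_one,
      mul_inv_cancel₀ hC.ne']
  have hsmall := tendsto_measure_lt_abs_biSup_div_log_rpow_sub hb hC hAEP hmeas hdist hindep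
    hCt (lt_min hε (half_pos ht)) ((min_le_right _ _).trans_lt (half_lt_self ht))
  refine tendsto_of_tendsto_of_tendsto_of_le_of_le tendsto_const_nhds hsmall
    (fun n => zero_le) fun n => measure_mono fun ω (hω : ε < _) =>
      (min_le_left ε _).trans_lt hω

/-- maximum of an i.i.d. AEP(b,C) sample grows like (C^{-1} log n)^{1/b}. -/
theorem stmt0 (ν : Measure ℝ) (hν : IsProbabilityMeasure ν)
    (b C : ℝ) (hb : 0 < b) (hC : 0 < C) (hAEP : MemAEP ν b C)
    {Ω : Type*} [MeasurableSpace Ω] (μ : Measure Ω) (hμ : IsProbabilityMeasure μ)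
    (X : ℕ → Ω → ℝ) (hmeas : ∀ i, Measurable (X i))
    (hdist : ∀ i, μ.map (X i) = ν)
    (hindep : ProbabilityTheory.iIndepFun X μ) :
    ∀ ε > 0, Tendsto (fun n : ℕ =>
      μ {ω | ε < |(⨆ i ∈ Finset.range n, X i ω) / (Real.log n) ^ (1 / b)
                    - C ^ (-(1 / b))|})
      atTop (nhds 0) :=
  stmt0_general ν hν b C hb hC hAEP μ X hmeas hdist hindep
end

section
/- Consider site percolation on ℤ^d with parameter p < p_c, and let S_m denote the size of the largest open cluster within the box V_m = {1, ..., m}^d. Then S_m / log m → d / ζ_p in probability as m → ∞, where ζ_p = -lim_{k→∞} (1/k) log P_p(S ≥ k) ∈ (0, ∞). -/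
open MeasureTheory Filter Set
open scoped Classical

namespace Perc

abbrev Vertex (d : ℕ) := Fin d → ℤ

/-- Nearest-neighbor adjacency on ℤ^d. -/
def adj {d : ℕ} (v w : Vertex d) : Prop := (∑ i, (v i - w i).natAbs) = 1

/-- Adjacency between open vertices in configuration ω. -/
def openAdj {d : ℕ} (ω : Vertex d → Bool) (v w : Vertex d) : Prop :=
  adj v w ∧ ω v = true ∧ ω w = true

/-- Open cluster at v (empty if v is closed). -/
def cluster {d : ℕ} (ω : Vertex d → Bool) (v : Vertex d) : Set (Vertex d) :=
  {w | ω v = true ∧ Relation.ReflTransGen (openAdj ω) v w}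

/-- Event: the open cluster at v contains at least k vertices. -/
def clusterGE {d : ℕ} (v : Vertex d) (k : ℕ) : Set (Vertex d → Bool) :=
  {ω | ∃ T : Finset (Vertex d), ↑T ⊆ cluster ω v ∧ T.card = k}

/-- Event: the open cluster at v contains at least x vertices (real threshold). -/
def clusterGEr {d : ℕ} (v : Vertex d) (x : ℝ) : Set (Vertex d → Bool) :=
  {ω | ∃ T : Finset (Vertex d), ↑T ⊆ cluster ω v ∧ x ≤ (T.card : ℝ)}

/-- Event: the open cluster at v has exactly k vertices (and is finite). -/
def clusterEq {d : ℕ} (v : Vertex d) (k : ℕ) : Set (Vertex d → Bool) :=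
  {ω | (cluster ω v).Finite ∧ (cluster ω v).ncard = k}

/-- Event: the open cluster at v is finite of size at least k. -/
def clusterFinGE {d : ℕ} (v : Vertex d) (k : ℕ) : Set (Vertex d → Bool) :=
  {ω | (cluster ω v).Finite ∧ k ≤ (cluster ω v).ncard}

/-- μ is (possibly inhomogeneous) Bernoulli site percolation with parameters q. -/
def IsSitePerc {d : ℕ} (μ : Measure (Vertex d → Bool)) (q : Vertex d → ℝ) : Prop :=
  IsProbabilityMeasure μ ∧
  ∀ (s : Finset (Vertex d)) (f : Vertex d → Bool),
    μ {ω | ∀ v ∈ s, ω v = f v}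
      = ∏ v ∈ s, (if f v then ENNReal.ofReal (q v) else ENNReal.ofReal (1 - q v))

/-- μ is Bernoulli site percolation with parameter p. -/
def IsBernoulliPerc {d : ℕ} (μ : Measure (Vertex d → Bool)) (p : ℝ) : Prop :=
  IsSitePerc μ (fun _ => p)

def origin (d : ℕ) : Vertex d := fun _ => 0

/-- Critical probability for site percolation on ℤ^d. -/
noncomputable def pc (d : ℕ) : ℝ :=
  sSup {p : ℝ | 0 ≤ p ∧ p ≤ 1 ∧ ∀ μ : Measure (Vertex d → Bool),
    IsBernoulliPerc μ p → μ {ω | (cluster ω (origin d)).Infinite} = 0}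

/-- The box V_m = {1, ..., m}^d. -/
def box (d m : ℕ) : Set (Vertex d) := {v | ∀ i, 1 ≤ v i ∧ v i ≤ (m : ℤ)}

/-- Adjacency between open vertices within a region B. -/
def openAdjIn {d : ℕ} (B : Set (Vertex d)) (ω : Vertex d → Bool) (v w : Vertex d) : Prop :=
  adj v w ∧ v ∈ B ∧ w ∈ B ∧ ω v = true ∧ ω w = true

/-- Open cluster at v within the region B. -/
def clusterIn {d : ℕ} (B : Set (Vertex d)) (ω : Vertex d → Bool) (v : Vertex d) :
    Set (Vertex d) :=
  {w | v ∈ B ∧ ω v = true ∧ Relation.ReflTransGen (openAdjIn B ω) v w}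

/-- S_m: the size of the largest open cluster within the box V_m. -/
noncomputable def largest (d m : ℕ) (ω : Vertex d → Bool) : ℕ :=
  sSup {n : ℕ | ∃ v : Vertex d, n = (clusterIn (box d m) ω v).ncard}

/-- N_m(k): the number of open clusters of size exactly k within the box V_m. -/
noncomputable def Nm (d m k : ℕ) (ω : Vertex d → Bool) : ℝ :=
  ∑ v ∈ Fintype.piFinset (fun _ : Fin d => Finset.Icc (1 : ℤ) (m : ℤ)),
    if (clusterIn (box d m) ω v).ncard = k then (1 : ℝ) / k else 0

/-- ℓ^∞ distance between vertices. -/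
def linfDist {d : ℕ} (v w : Vertex d) : ℕ :=
  Finset.univ.sup fun i => (v i - w i).natAbs

end Perc

/-!
The upper bound is a union bound: `S_m ≥ a log m` forces one of the `m ^ d` vertices of the box
to have an open cluster of size at least `a log m`, which by translation invariance has
probability about `m ^ d · m ^ (-ζ a)`; this tends to `0` when `a > d / ζ`.

For the lower bound take `k ≈ b log m` and cut the box into `n ^ d ≈ (m / (4 b log m)) ^ d`
disjoint cubes of side `4k + 3`. A cluster with between `k` and `2k` vertices stays within
ℓ∞-distance `2k` of its starting point, so the event that the centre of a cube has such a cluster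
depends only on that cube. These `n ^ d` events are therefore independent, and each has
probability at least `e ^ (-c k)` for any `c > ζ`, because `P(S ≥ 2k + 1)` decays at almost twice
the rate of `P(S ≥ k)`. If `S_m < k`, none of them occurs, which has probability at most
`exp (-n ^ d e ^ (-c k)) → 0` when `b < d / ζ`.

Independence and translation invariance both come from identifying Bernoulli percolation with
the infinite product of its one-site marginal.
-/

namespace Perc

variable {d : ℕ}

section Geometry

lemma linfDist_le_iff {v w : Vertex d} {R : ℕ} :
    linfDist v w ≤ R ↔ ∀ i, (v i - w i).natAbs ≤ R := by
  simp [linfDist, Finset.sup_le_iff]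

@[simp] lemma linfDist_self (v : Vertex d) : linfDist v v = 0 := by
  simp [linfDist]

lemma linfDist_triangle (u v w : Vertex d) : linfDist u w ≤ linfDist u v + linfDist v w :=
  linfDist_le_iff.2 fun i => by
    have := linfDist_le_iff.1 (le_refl (linfDist u v)) i
    have := linfDist_le_iff.1 (le_refl (linfDist v w)) i
    omega

lemma linfDist_le_one_of_adj {v w : Vertex d} (h : adj v w) : linfDist v w ≤ 1 :=
  linfDist_le_iff.2 fun i => h ▸ Finset.single_le_sum (f := fun j => (v j - w j).natAbs)
    (fun _ _ => Nat.zero_le _) (Finset.mem_univ i)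

noncomputable def linfBall (c : Vertex d) (R : ℕ) : Finset (Vertex d) :=
  Fintype.piFinset fun i => Finset.Icc (c i - R) (c i + R)

lemma mem_linfBall {c x : Vertex d} {R : ℕ} : x ∈ linfBall c R ↔ linfDist c x ≤ R := by
  simp only [linfBall, Fintype.mem_piFinset, Finset.mem_Icc, linfDist_le_iff]
  exact forall_congr' fun i => by omega

lemma center_mem_linfBall (c : Vertex d) (R : ℕ) : c ∈ linfBall c R := by
  simp [mem_linfBall]

lemma linfBall_mono (c : Vertex d) {R R' : ℕ} (h : R ≤ R') : linfBall c R ⊆ linfBall c R' :=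
  fun _ hx => mem_linfBall.2 ((mem_linfBall.1 hx).trans h)

end Geometry

section Cluster

variable {ω ω' : Vertex d → Bool} {v w : Vertex d}

lemma mem_clusterGE_iff {k : ℕ} : ω ∈ clusterGE v k ↔ (k : ℕ∞) ≤ (cluster ω v).encard := by
  constructor
  · rintro ⟨T, hT, rfl⟩
    simpa using Set.encard_le_encard hT
  · intro h
    obtain ⟨t, ht, htk⟩ := Set.exists_subset_encard_eq h
    have hfin : t.Finite := Set.finite_of_encard_eq_coe htk
    refine ⟨hfin.toFinset, by simpa using ht, ?_⟩
    exact_mod_cast hfin.encard_eq_coe_toFinset_card.symm.trans htk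

/-- The ℓ∞-distance from `v` grows by at most one along each open edge. -/
lemma Iic_subset_image_linfDist_cluster (hw : w ∈ cluster ω v) :
    Set.Iic (linfDist v w) ⊆ linfDist v '' cluster ω v := by
  obtain ⟨hv, hpath⟩ := hw
  induction hpath with
  | refl => exact fun j hj => ⟨v, ⟨hv, .refl⟩, by simpa [eq_comm] using hj⟩
  | @tail b c hvb hbc ih =>
    intro j hj
    have hstep := (linfDist_triangle v b c).trans
      (Nat.add_le_add_left (linfDist_le_one_of_adj hbc.1) _)
    rcases le_or_gt j (linfDist v b) with hjb | hjb
    · exact ih hjb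
    · exact ⟨c, ⟨hv, hvb.tail hbc⟩, by simp only [Set.mem_Iic] at hj; omega⟩

lemma cluster_subset_linfBall {r : ℕ} (h : ω ∉ clusterGE v (r + 1)) :
    cluster ω v ⊆ linfBall v r := by
  intro w hw
  by_contra hfar
  rw [Finset.mem_coe, mem_linfBall, not_le] at hfar
  refine h (mem_clusterGE_iff.2 ?_)
  calc ((r + 1 : ℕ) : ℕ∞) = ((Finset.range (r + 1) : Finset ℕ) : Set ℕ).encard := by
        rw [Set.encard_coe_eq_coe_finsetCard, Finset.card_range]
    _ ≤ (linfDist v '' cluster ω v).encard := by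
        refine Set.encard_le_encard fun j hj => Iic_subset_image_linfDist_cluster hw ?_
        simp only [Finset.coe_range, Set.mem_Iio] at hj
        exact Set.mem_Iic.2 (by omega)
    _ ≤ (cluster ω v).encard := Set.encard_image_le _ _

/-- The ball of radius `r + 1` contains the outer boundary of the cluster. -/
lemma cluster_eq_of_eqOn_linfBall {r : ℕ} (hsub : cluster ω v ⊆ linfBall v r)
    (hag : ∀ x ∈ linfBall v (r + 1), ω' x = ω x) : cluster ω' v = cluster ω v := by
  have hagr : ∀ x ∈ cluster ω v, ω' x = ω x :=
    fun x hx => hag x (linfBall_mono v (Nat.le_succ r) (hsub hx))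
  have hvv : ω' v = ω v := hag v (center_mem_linfBall v _)
  cases hov : ω v with
  | false => ext w; simp [cluster, hov, hvv]
  | true =>
    refine Set.Subset.antisymm (fun w hw => ?_) (fun w hw => ⟨hvv.trans hov, ?_⟩)
    · obtain ⟨-, hpath⟩ := hw
      induction hpath with
      | refl => exact ⟨hov, .refl⟩
      | @tail b c _ hbc ih =>
        have hc : c ∈ linfBall v (r + 1) := mem_linfBall.2 <| (linfDist_triangle v b c).trans
          (add_le_add (mem_linfBall.1 (hsub ih)) (linfDist_le_one_of_adj hbc.1))
        exact ⟨hov, ih.2.tail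
          ⟨hbc.1, (hagr b ih).symm.trans hbc.2.1, (hag c hc).symm.trans hbc.2.2⟩⟩
    · obtain ⟨-, hpath⟩ := hw
      induction hpath with
      | refl => exact .refl
      | @tail b c hvb hbc ih =>
        exact ih.tail ⟨hbc.1, (hagr b ⟨hov, hvb⟩).trans hbc.2.1,
          (hagr c ⟨hov, hvb.tail hbc⟩).trans hbc.2.2⟩

variable {B : Set (Vertex d)}

lemma clusterIn_subset_cluster : clusterIn B ω v ⊆ cluster ω v := by
  rintro w ⟨-, hv, hpath⟩
  exact ⟨hv, Relation.ReflTransGen.mono (fun _ _ h => ⟨h.1, h.2.2.2⟩) _ _ hpath⟩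

lemma clusterIn_subset : clusterIn B ω v ⊆ B := by
  rintro w ⟨hvB, -, hpath⟩
  rcases hpath.cases_tail with rfl | ⟨_, _, hbw⟩
  exacts [hvB, hbw.2.2.1]

lemma clusterIn_eq_cluster (hvB : v ∈ B) (hsub : cluster ω v ⊆ B) :
    clusterIn B ω v = cluster ω v := by
  refine clusterIn_subset_cluster.antisymm fun w hw => ⟨hvB, hw.1, ?_⟩
  obtain ⟨hv, hpath⟩ := hw
  induction hpath with
  | refl => exact .refl
  | @tail b c hvb hbc ih =>
    exact ih.tail ⟨hbc.1, hsub ⟨hv, hvb⟩, hsub ⟨hv, hvb.tail hbc⟩, hbc.2.1, hbc.2.2⟩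

end Cluster

section Translation

def shift (u : Vertex d) (ω : Vertex d → Bool) : Vertex d → Bool := fun x => ω (x + u)

lemma adj_add_right_iff (x y u : Vertex d) : adj (x + u) (y + u) ↔ adj x y := by
  simp [adj]

lemma openAdj_shift_iff (u : Vertex d) (ω : Vertex d → Bool) (a b : Vertex d) :
    openAdj (shift u ω) a b ↔ openAdj ω (a + u) (b + u) := by
  simp [openAdj, shift, adj_add_right_iff]

lemma cluster_shift (u w : Vertex d) (ω : Vertex d → Bool) :
    cluster (shift u ω) w = (· + u) ⁻¹' cluster ω (w + u) := by
  ext x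
  refine and_congr_right fun _ => ⟨fun h => ?_, fun h => ?_⟩
  · exact Relation.ReflTransGen.lift (· + u) (fun a b => (openAdj_shift_iff u ω a b).1) _ _ h
  · simpa [Function.onFun] using Relation.ReflTransGen.lift (· - u)
      (fun a b hab => (openAdj_shift_iff u ω _ _).2 (by simpa using hab)) _ _ h

lemma shift_preimage_clusterGE (u w : Vertex d) (k : ℕ) :
    shift u ⁻¹' clusterGE w k = clusterGE (w + u) k := by
  ext ω
  rw [Set.mem_preimage, mem_clusterGE_iff, mem_clusterGE_iff, cluster_shift,
    Set.encard_preimage_of_injective_subset_range (add_left_injective u)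
      fun y _ => ⟨y - u, sub_add_cancel y u⟩]

lemma measurable_shift (u : Vertex d) : Measurable (shift u) :=
  measurable_pi_lambda _ fun x => measurable_pi_apply (x + u)

end Translation

section Supported

open ProbabilityTheory

variable {ι β : Type*}

def Supported (D : Finset ι) (A : Set (ι → β)) : Prop :=
  ∀ ⦃ω ω' : ι → β⦄, (∀ i ∈ D, ω i = ω' i) → ω ∈ A → ω' ∈ A

variable {D D' : Finset ι} {A B : Set (ι → β)}

lemma Supported.compl (hA : Supported D A) : Supported D Aᶜ :=
  fun _ _ hag hω hω' => hω (hA (fun i hi => (hag i hi).symm) hω')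

lemma Supported.eq_preimage (hA : Supported D A) : A = D.restrict ⁻¹' (D.restrict '' A) := by
  refine (Set.subset_preimage_image _ _).antisymm ?_
  rintro ω ⟨ω', hω', heq⟩
  exact hA (fun i hi => congrFun heq ⟨i, hi⟩) hω'

lemma supported_biInter {κ : Type*} {J : Finset κ} {D : κ → Finset ι} {E : κ → Set (ι → β)}
    (hE : ∀ j ∈ J, Supported (D j) (E j)) : Supported (J.biUnion D) (⋂ j ∈ J, E j) := by
  intro ω ω' hag hω
  simp only [Set.mem_iInter] at hω ⊢
  exact fun j hj => hE j hj (fun i hi => hag i (Finset.mem_biUnion.2 ⟨j, hj, hi⟩)) (hω j hj)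

variable [MeasurableSpace β] [Countable β] [MeasurableSingletonClass β]

lemma Supported.measurableSet (hA : Supported D A) : MeasurableSet A := by
  rw [hA.eq_preimage]
  exact Finset.measurable_restrict D (Set.to_countable _).measurableSet

variable {μ : Measure (ι → β)}

lemma Supported.measure_inter (hind : iIndepFun (fun i (ω : ι → β) => ω i) μ)
    (hA : Supported D A) (hB : Supported D' B) (hDD' : Disjoint D D') :
    μ (A ∩ B) = μ A * μ B := by
  rw [hA.eq_preimage, hB.eq_preimage]
  exact (hind.indepFun_finset D D' hDD' measurable_pi_apply).measure_inter_preimage_eq_mul _ _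
    (Set.to_countable _).measurableSet (Set.to_countable _).measurableSet

lemma measure_biInter_of_supported {κ : Type*} (hind : iIndepFun (fun i (ω : ι → β) => ω i) μ)
    (J : Finset κ) {D : κ → Finset ι} {E : κ → Set (ι → β)}
    (hdisj : (J : Set κ).PairwiseDisjoint D) (hE : ∀ j ∈ J, Supported (D j) (E j)) :
    μ (⋂ j ∈ J, E j) = ∏ j ∈ J, μ (E j) := by
  induction J using Finset.induction_on with
  | empty => simpa using hind.isProbabilityMeasure.measure_univ
  | @insert a J ha ih =>
    rw [Finset.set_biInter_insert, Finset.prod_insert ha,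
      ← ih (hdisj.subset (by simp)) fun j hj => hE j (Finset.mem_insert_of_mem hj)]
    refine (hE a (Finset.mem_insert_self a J)).measure_inter hind
      (supported_biInter fun j hj => hE j (Finset.mem_insert_of_mem hj))
      ((Finset.disjoint_biUnion_right _ _ _).2 fun j hj => hdisj (by simp) (by simp [hj]) ?_)
    rintro rfl
    exact ha hj

end Supported

section Bernoulli

open ProbabilityTheory

variable {p : ℝ} {μ : Measure (Vertex d → Bool)}

lemma IsBernoulliPerc.isProbabilityMeasure_map_eval (hμ : IsBernoulliPerc μ p) :
    IsProbabilityMeasure (μ.map fun ω => ω (origin d)) :=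
  have := hμ.1
  Measure.isProbabilityMeasure_map (measurable_pi_apply _).aemeasurable

lemma IsBernoulliPerc.measure_eq_prod (hμ : IsBernoulliPerc μ p) (s : Finset (Vertex d))
    (f : Vertex d → Bool) :
    μ {ω | ∀ v ∈ s, ω v = f v} = ∏ v ∈ s, μ.map (fun ω => ω (origin d)) {f v} := by
  rw [hμ.2 s f]
  refine Finset.prod_congr rfl fun v _ => ?_
  rw [Measure.map_apply (measurable_pi_apply _) (measurableSet_singleton _)]
  simpa [Set.preimage, Set.mem_singleton_iff] using (hμ.2 {origin d} fun _ => f v).symm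

lemma IsBernoulliPerc.map_restrict (hμ : IsBernoulliPerc μ p) (s : Finset (Vertex d)) :
    μ.map s.restrict = Measure.pi fun _ : s => μ.map (fun ω => ω (origin d)) := by
  have := hμ.isProbabilityMeasure_map_eval
  refine Measure.ext_of_singleton fun g => ?_
  let f : Vertex d → Bool := fun v => if h : v ∈ s then g ⟨v, h⟩ else false
  have hg : s.restrict ⁻¹' ({g} : Set (s → Bool)) = {ω | ∀ v ∈ s, ω v = f v} := by
    ext ω
    simp only [Set.mem_preimage, Set.mem_singleton_iff, funext_iff, f]
    exact ⟨fun h v hv => by simp [hv, ← h ⟨v, hv⟩], fun h v => by simp [h v v.2]⟩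
  rw [Measure.map_apply (Finset.measurable_restrict s) (measurableSet_singleton g), hg,
    hμ.measure_eq_prod, Measure.pi_singleton, ← Finset.prod_coe_sort s]
  simp [f]

theorem IsBernoulliPerc.eq_infinitePi (hμ : IsBernoulliPerc μ p) :
    μ = Measure.infinitePi fun _ : Vertex d => μ.map (fun ω => ω (origin d)) := by
  have := hμ.isProbabilityMeasure_map_eval
  exact IsProjectiveLimit.unique hμ.map_restrict (Measure.isProjectiveLimit_infinitePi _)

lemma IsBernoulliPerc.iIndepFun (hμ : IsBernoulliPerc μ p) :
    iIndepFun (fun v (ω : Vertex d → Bool) => ω v) μ := by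
  have := hμ.isProbabilityMeasure_map_eval
  rw [hμ.eq_infinitePi]
  exact iIndepFun_infinitePi (X := fun _ b => b) fun _ => measurable_id

lemma IsBernoulliPerc.map_shift (hμ : IsBernoulliPerc μ p) (u : Vertex d) :
    μ.map (shift u) = μ := by
  have := hμ.isProbabilityMeasure_map_eval
  conv_lhs => rw [hμ.eq_infinitePi]
  exact (Measure.map_infinitePi_infinitePi_of_inj (add_left_injective u)).trans
    hμ.eq_infinitePi.symm

lemma IsBernoulliPerc.measure_shift_preimage_le (hμ : IsBernoulliPerc μ p) (u : Vertex d)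
    (A : Set (Vertex d → Bool)) : μ (shift u ⁻¹' A) ≤ μ A :=
  calc μ (shift u ⁻¹' A)
      ≤ μ.map (shift u) A :=
        Measure.le_map_apply (measurable_shift u).aemeasurable A
    _ = μ A := by rw [hμ.map_shift]

/-- `E` need not be measurable, hence the two inequalities. -/
lemma IsBernoulliPerc.measure_eq_of_shift_preimage (hμ : IsBernoulliPerc μ p)
    {E : Vertex d → Set (Vertex d → Bool)} (hE : ∀ u w, shift u ⁻¹' E w = E (w + u))
    (v : Vertex d) : μ (E v) = μ (E (origin d)) := by
  have h₁ := hμ.measure_shift_preimage_le v (E (origin d))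
  have h₂ := hμ.measure_shift_preimage_le (-v) (E v)
  rw [hE, show origin d + v = v from zero_add v] at h₁
  rw [hE, show v + -v = origin d from add_neg_cancel v] at h₂
  exact le_antisymm h₁ h₂

end Bernoulli

section ClusterBetween

def clusterBetween (c : Vertex d) (k : ℕ) : Set (Vertex d → Bool) :=
  clusterGE c k \ clusterGE c (2 * k + 1)

lemma shift_preimage_clusterBetween (u w : Vertex d) (k : ℕ) :
    shift u ⁻¹' clusterBetween w k = clusterBetween (w + u) k := by
  simp only [clusterBetween, Set.preimage_sdiff, shift_preimage_clusterGE]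

lemma supported_clusterBetween (c : Vertex d) (k : ℕ) :
    Supported (linfBall c (2 * k + 1)) (clusterBetween c k) := by
  rintro ω ω' hag ⟨hge, hlt⟩
  have heq : cluster ω' c = cluster ω c :=
    cluster_eq_of_eqOn_linfBall (cluster_subset_linfBall hlt) fun x hx => (hag x hx).symm
  simp only [clusterBetween, Set.mem_sdiff, mem_clusterGE_iff, heq] at hge hlt ⊢
  exact ⟨hge, hlt⟩

lemma le_ncard_clusterIn_of_mem_clusterBetween {ω : Vertex d → Bool} {c : Vertex d} {k : ℕ}
    {B : Set (Vertex d)} (hω : ω ∈ clusterBetween c k) (hB : B.Finite)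
    (hcB : ↑(linfBall c (2 * k)) ⊆ B) : k ≤ (clusterIn B ω c).ncard := by
  have hsub := cluster_subset_linfBall hω.2
  have heq := clusterIn_eq_cluster (hcB (center_mem_linfBall c _)) (hsub.trans hcB)
  have hge := mem_clusterGE_iff.1 hω.1
  rw [← heq, ← (hB.subset clusterIn_subset).cast_ncard_eq] at hge
  exact_mod_cast hge

end ClusterBetween

section Box

noncomputable def boxFinset (d m : ℕ) : Finset (Vertex d) :=
  Fintype.piFinset fun _ => Finset.Icc 1 (m : ℤ)

variable {m : ℕ}

@[simp] lemma coe_boxFinset : (boxFinset d m : Set (Vertex d)) = box d m := by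
  ext v
  simp only [boxFinset, Finset.mem_coe, Fintype.mem_piFinset, Finset.mem_Icc]
  rfl

lemma card_boxFinset : (boxFinset d m).card = m ^ d := by
  simp [boxFinset]

lemma box_finite : (box d m).Finite := by
  simpa using (boxFinset d m).finite_toSet

lemma ncard_clusterIn_box_le (ω : Vertex d → Bool) (v : Vertex d) :
    (clusterIn (box d m) ω v).ncard ≤ m ^ d := by
  rw [← card_boxFinset, ← Set.ncard_coe_finset, coe_boxFinset]
  exact Set.ncard_le_ncard clusterIn_subset box_finite

lemma bddAbove_ncard_clusterIn_box (ω : Vertex d → Bool) :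
    BddAbove {n | ∃ v, n = (clusterIn (box d m) ω v).ncard} := by
  refine ⟨m ^ d, ?_⟩
  rintro _ ⟨v, rfl⟩
  exact ncard_clusterIn_box_le ω v

lemma le_largest (ω : Vertex d → Bool) (v : Vertex d) :
    (clusterIn (box d m) ω v).ncard ≤ largest d m ω :=
  le_csSup (bddAbove_ncard_clusterIn_box ω) ⟨v, rfl⟩

lemma exists_largest_eq (ω : Vertex d → Bool) :
    ∃ v, largest d m ω = (clusterIn (box d m) ω v).ncard :=
  Nat.sSup_mem (s := {n | ∃ v, n = (clusterIn (box d m) ω v).ncard}) ⟨_, origin d, rfl⟩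
    (bddAbove_ncard_clusterIn_box ω)

end Box

section LargestCluster

variable {p : ℝ} {μ : Measure (Vertex d → Bool)} {m k : ℕ}

lemma setOf_le_largest_subset (hk : 1 ≤ k) :
    {ω | k ≤ largest d m ω} ⊆ ⋃ v ∈ boxFinset d m, clusterGE v k := by
  intro ω hω
  obtain ⟨v, hv⟩ := exists_largest_eq (m := m) ω
  have hkv : k ≤ (clusterIn (box d m) ω v).ncard := hv ▸ hω
  obtain ⟨w, hw⟩ := Set.nonempty_of_ncard_ne_zero (by omega : (clusterIn (box d m) ω v).ncard ≠ 0)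
  refine Set.mem_biUnion (by simpa using hw.1) (mem_clusterGE_iff.2 ?_)
  calc (k : ℕ∞) ≤ (clusterIn (box d m) ω v).ncard := by exact_mod_cast hkv
    _ = (clusterIn (box d m) ω v).encard := (box_finite.subset clusterIn_subset).cast_ncard_eq
    _ ≤ (cluster ω v).encard := Set.encard_le_encard clusterIn_subset_cluster

lemma IsBernoulliPerc.measureReal_le_largest_le (hμ : IsBernoulliPerc μ p) (hk : 1 ≤ k) :
    μ.real {ω | k ≤ largest d m ω} ≤ m ^ d * μ.real (clusterGE (origin d) k) := by
  have := hμ.1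
  calc μ.real {ω | k ≤ largest d m ω}
      ≤ ∑ v ∈ boxFinset d m, μ.real (clusterGE v k) :=
        (measureReal_mono (setOf_le_largest_subset hk) (measure_ne_top μ _)).trans
          (measureReal_biUnion_finset_le _ _)
    _ = m ^ d * μ.real (clusterGE (origin d) k) := by
        simp [measureReal_def, card_boxFinset, hμ.measure_eq_of_shift_preimage
          (E := (clusterGE · k)) fun u w => shift_preimage_clusterGE u w k]

/-- The ball of radius `2k + 1` about `subboxCenter k j` is the cube
`∏ᵢ [(4k+3) jᵢ + 1, (4k+3) (jᵢ + 1)]`. -/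
def subboxCenter (k : ℕ) (j : Fin d → ℕ) : Vertex d :=
  fun i => ((4 * k + 3) * j i + (2 * k + 2) : ℕ)

lemma linfBall_subboxCenter_subset_box {n : ℕ} (h : (4 * k + 3) * n ≤ m) {j : Fin d → ℕ}
    (hj : ∀ i, j i < n) : ↑(linfBall (subboxCenter k j) (2 * k + 1)) ⊆ box d m := by
  intro x hx i
  have hxi := linfDist_le_iff.1 (mem_linfBall.1 hx) i
  have hjn : (4 * k + 3) * (j i + 1) ≤ (4 * k + 3) * n := Nat.mul_le_mul_left _ (hj i)
  simp only [subboxCenter] at hxi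
  rw [mul_add] at hjn
  generalize (4 * k + 3) * j i = a at hxi hjn
  omega

lemma pairwise_disjoint_linfBall_subboxCenter (k : ℕ) :
    Pairwise (Function.onFun Disjoint fun j : Fin d → ℕ =>
      linfBall (subboxCenter k j) (2 * k + 1)) := by
  intro j j' hne
  refine Finset.disjoint_left.2 fun x hx hx' => hne (funext fun i => ?_)
  have h := linfDist_le_iff.1 (mem_linfBall.1 hx) i
  have h' := linfDist_le_iff.1 (mem_linfBall.1 hx') i
  have step : ∀ a b : ℕ, a < b → (4 * k + 3) * a + (4 * k + 3) ≤ (4 * k + 3) * b :=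
    fun a b hab => by nlinarith
  have := step (j i) (j' i)
  have := step (j' i) (j i)
  simp only [subboxCenter] at h h'
  generalize (4 * k + 3) * j i = a at *
  generalize (4 * k + 3) * j' i = b at *
  omega

lemma setOf_largest_lt_subset {n : ℕ} (h : (4 * k + 3) * n ≤ m) :
    {ω | largest d m ω < k} ⊆
      ⋂ j ∈ Fintype.piFinset fun _ : Fin d => Finset.range n,
        (clusterBetween (subboxCenter k j) k)ᶜ := by
  intro ω hω
  simp only [Set.mem_iInter, Fintype.mem_piFinset, Finset.mem_range]
  intro j hj hmem
  have := le_ncard_clusterIn_of_mem_clusterBetween hmem box_finite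
    ((Finset.coe_subset.2 (linfBall_mono _ (Nat.le_succ _))).trans
      (linfBall_subboxCenter_subset_box h hj))
  have := le_largest (m := m) ω (subboxCenter k j)
  have : largest d m ω < k := hω
  omega

lemma IsBernoulliPerc.measureReal_largest_lt_le (hμ : IsBernoulliPerc μ p) {n : ℕ}
    (h : (4 * k + 3) * n ≤ m) :
    μ.real {ω | largest d m ω < k} ≤ (1 - μ.real (clusterBetween (origin d) k)) ^ (n ^ d) := by
  have := hμ.1
  calc μ.real {ω | largest d m ω < k}
      ≤ μ.real (⋂ j ∈ Fintype.piFinset fun _ : Fin d => Finset.range n,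
          (clusterBetween (subboxCenter k j) k)ᶜ) := measureReal_mono (setOf_largest_lt_subset h)
    _ = ∏ j ∈ Fintype.piFinset fun _ : Fin d => Finset.range n,
          μ.real (clusterBetween (subboxCenter k j) k)ᶜ := by
        rw [measureReal_def, measure_biInter_of_supported hμ.iIndepFun _
          ((pairwise_disjoint_linfBall_subboxCenter k).set_pairwise _)
          fun j _ => (supported_clusterBetween _ k).compl, ENNReal.toReal_prod]
        rfl
    _ = (1 - μ.real (clusterBetween (origin d) k)) ^ (n ^ d) := by
        rw [Finset.prod_congr rfl fun j _ => by
          rw [probReal_compl_eq_one_sub (supported_clusterBetween _ k).measurableSet,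
            measureReal_def, hμ.measure_eq_of_shift_preimage (E := (clusterBetween · k))
            fun u w => shift_preimage_clusterBetween u w k]]
        simp [measureReal_def]

end LargestCluster

section Asymptotics

open Real

variable {x : ℕ → ℝ} {ζ c : ℝ}

lemma eventually_le_exp_of_tendsto
    (h : Tendsto (fun k : ℕ => -(1 / (k : ℝ)) * log (x k)) atTop (nhds ζ)) (hc : c < ζ) :
    ∀ᶠ k : ℕ in atTop, x k ≤ exp (-(c * k)) := by
  filter_upwards [h.eventually (lt_mem_nhds hc), eventually_gt_atTop 0] with k hk hk0
  rw [show -(1 / (k : ℝ)) * log (x k) = -log (x k) / k by ring,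
    lt_div_iff₀ (by exact_mod_cast hk0)] at hk
  rcases le_or_gt (x k) 0 with hx | hx
  · exact hx.trans (exp_pos _).le
  · exact (exp_log hx).symm.le.trans (exp_le_exp.2 (by linarith))

lemma eventually_exp_le_of_tendsto
    (h : Tendsto (fun k : ℕ => -(1 / (k : ℝ)) * log (x k)) atTop (nhds ζ))
    (hx : ∀ k, 0 ≤ x k) (hζ : 0 < ζ) (hc : ζ < c) :
    ∀ᶠ k : ℕ in atTop, exp (-(c * k)) ≤ x k := by
  filter_upwards [h.eventually (gt_mem_nhds hc), h.eventually (lt_mem_nhds hζ),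
    eventually_gt_atTop 0] with k hk hpos hk0
  have hx0 : x k ≠ 0 := fun h0 => by simp [h0] at hpos
  rw [show -(1 / (k : ℝ)) * log (x k) = -log (x k) / k by ring,
    div_lt_iff₀ (by exact_mod_cast hk0)] at hk
  rw [← exp_log ((hx k).lt_of_ne' hx0)]
  exact exp_le_exp.2 (by linarith)

lemma eventually_two_mul_exp_le {c₁ : ℝ} (h : c₁ < c) :
    ∀ᶠ k : ℕ in atTop, 2 * exp (-(c * k)) ≤ exp (-(c₁ * k)) := by
  have ht : Tendsto (fun k : ℕ => exp (-((c - c₁) * k))) atTop (nhds 0) :=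
    tendsto_exp_neg_atTop_nhds_zero.comp
      (tendsto_natCast_atTop_atTop.const_mul_atTop (sub_pos.2 h))
  filter_upwards [ht.eventually (eventually_le_nhds (by norm_num : (0 : ℝ) < 1 / 2))] with k hk
  rw [show -(c * k) = -((c - c₁) * k) + -(c₁ * k) by ring, exp_add]
  nlinarith [exp_pos (-(c₁ * k))]

lemma eventually_ceil_log_le_rpow {b γ : ℝ} (hb : 0 ≤ b) (hγ : 0 < γ) :
    ∀ᶠ m : ℕ in atTop, 4 * (⌈b * log m⌉₊ : ℝ) + 3 ≤ (m : ℝ) ^ γ := by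
  have ho : (fun x : ℝ => 4 * b * log x + 7) =o[atTop] fun x => x ^ γ :=
    ((isLittleO_log_rpow_atTop hγ).const_mul_left (4 * b)).add
      (Asymptotics.isLittleO_const_left.2 <| Or.inr <|
        tendsto_norm_atTop_atTop.comp (tendsto_rpow_atTop hγ))
  filter_upwards [tendsto_natCast_atTop_atTop.eventually (ho.bound one_pos),
    eventually_gt_atTop 0] with m hm hm0
  have hlog : 0 ≤ b * log m := mul_nonneg hb (log_natCast_nonneg m)
  have hceil := Nat.ceil_lt_add_one hlog
  rw [one_mul, norm_of_nonneg (rpow_nonneg (Nat.cast_nonneg m) γ)] at hm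
  linarith [le_norm_self (4 * b * log m + 7)]

lemma eventually_rpow_le_two_mul_div {b γ : ℝ} (hb : 0 ≤ b) (hγ : 0 < γ) (hγ1 : γ < 1) :
    ∀ᶠ m : ℕ in atTop,
      (m : ℝ) ^ (1 - γ) ≤ 2 * ((m / (4 * ⌈b * log m⌉₊ + 3) : ℕ) : ℝ) := by
  filter_upwards [eventually_ceil_log_le_rpow hb hγ, eventually_gt_atTop 0,
    tendsto_natCast_atTop_atTop.eventually
      ((tendsto_rpow_atTop (sub_pos.2 hγ1)).eventually_ge_atTop 2)] with m hL hm h2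
  set L := 4 * ⌈b * log m⌉₊ + 3
  have hm0 : (0 : ℝ) < m := by exact_mod_cast hm
  have hL0 : (0 : ℝ) < L := by positivity
  have hdiv : (m : ℝ) < L * ((m / L : ℕ) + 1) := by exact_mod_cast Nat.lt_mul_div_succ m (by omega)
  have hsplit : (m : ℝ) ^ (1 - γ) * (m : ℝ) ^ γ = m := by
    rw [← rpow_add hm0, sub_add_cancel, rpow_one]
  have : (m : ℝ) ^ (1 - γ) * L < L * ((m / L : ℕ) + 1) :=
    (mul_le_mul_of_nonneg_left (by push_cast [L]; exact hL) (by positivity)).trans_lt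
      (hsplit ▸ hdiv)
  nlinarith

lemma tendsto_div_ceil_log_pow_mul_exp {b : ℝ} (hb : 0 < b) (hc : 0 < c)
    (hbc : b * c < d) :
    Tendsto (fun m : ℕ => ((m / (4 * ⌈b * log m⌉₊ + 3) : ℕ) : ℝ) ^ d *
      exp (-(c * ⌈b * log m⌉₊))) atTop atTop := by
  have hd : (0 : ℝ) < d := (mul_pos hb hc).trans hbc
  set γ := (d - b * c) / (2 * d) with hγ
  have hγ0 : 0 < γ := div_pos (by linarith) (by positivity)
  have hγ1 : γ < 1 := by rw [hγ, div_lt_one (by positivity)]; nlinarith [mul_pos hb hc]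
  have hη : (1 - γ) * d + -(b * c) = (d - b * c) / 2 := by rw [hγ]; field_simp; ring
  refine tendsto_atTop_mono' atTop ?_ <|
    ((tendsto_rpow_atTop (by linarith : (0 : ℝ) < (d - b * c) / 2)).comp
      tendsto_natCast_atTop_atTop).const_mul_atTop (by positivity : 0 < exp (-c) / 2 ^ d)
  filter_upwards [eventually_rpow_le_two_mul_div hb.le hγ0 hγ1, eventually_gt_atTop 0]
    with m hn hm
  have hm0 : (0 : ℝ) < m := by exact_mod_cast hm
  have hexp : exp (-c) * (m : ℝ) ^ (-(b * c)) ≤ exp (-(c * ⌈b * log m⌉₊)) := by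
    rw [rpow_def_of_pos hm0, ← exp_add]
    have := Nat.ceil_lt_add_one (mul_nonneg hb.le (log_natCast_nonneg m))
    exact exp_le_exp.2 (by nlinarith)
  have hpow : ((m : ℝ) ^ (1 - γ) / 2) ^ d ≤ ((m / (4 * ⌈b * log m⌉₊ + 3) : ℕ) : ℝ) ^ d :=
    pow_le_pow_left₀ (by positivity) (by linarith) d
  calc exp (-c) / 2 ^ d * (m : ℝ) ^ ((d - b * c) / 2)
      = ((m : ℝ) ^ (1 - γ) / 2) ^ d * (exp (-c) * (m : ℝ) ^ (-(b * c))) := by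
        rw [div_pow, ← rpow_natCast ((m : ℝ) ^ (1 - γ)), ← rpow_mul hm0.le, ← hη,
          rpow_add hm0]
        ring
    _ ≤ _ := mul_le_mul hpow hexp (by positivity) (by positivity)

end Asymptotics

lemma tendsto_measure_zero_of_measureReal_le {α Ω : Type*} [MeasurableSpace Ω] {μ : Measure Ω}
    [IsFiniteMeasure μ] {l : Filter α} {s : α → Set Ω} {g : α → ℝ} (hg : Tendsto g l (nhds 0))
    (h : ∀ᶠ a in l, μ.real (s a) ≤ g a) : Tendsto (fun a => μ (s a)) l (nhds 0) := by
  have hg' := ENNReal.tendsto_ofReal hg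
  rw [ENNReal.ofReal_zero] at hg'
  refine tendsto_of_tendsto_of_tendsto_of_le_of_le' tendsto_const_nhds hg'
    (Eventually.of_forall fun _ => zero_le) ?_
  filter_upwards [h] with a ha
  rw [← ENNReal.ofReal_toReal (measure_ne_top μ (s a))]
  exact ENNReal.ofReal_le_ofReal ha

section Tails

open Real

variable {p ζ : ℝ} {μ : Measure (Vertex d → Bool)}

lemma measureReal_clusterGE_sub_le [IsFiniteMeasure μ] (c : Vertex d) (k : ℕ) :
    μ.real (clusterGE c k) - μ.real (clusterGE c (2 * k + 1)) ≤ μ.real (clusterBetween c k) := by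
  have := measureReal_mono (μ := μ)
    (show clusterGE c k ⊆ clusterBetween c k ∪ clusterGE c (2 * k + 1) from
      Set.subset_sdiff_union _ _)
  linarith [measureReal_union_le (μ := μ) (clusterBetween c k) (clusterGE c (2 * k + 1))]

/-- `P(S ≥ 2k + 1)` decays at almost twice the rate of `P(S ≥ k)`. -/
lemma IsBernoulliPerc.eventually_exp_le_measureReal_clusterBetween (hμ : IsBernoulliPerc μ p)
    (hζpos : 0 < ζ) (hζ : Tendsto (fun k : ℕ => -(1 / (k : ℝ)) *
      log ((μ (clusterGE (origin d) k)).toReal)) atTop (nhds ζ)) {c : ℝ} (hc : ζ < c) :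
    ∀ᶠ k : ℕ in atTop, exp (-(c * k)) ≤ μ.real (clusterBetween (origin d) k) := by
  have := hμ.1
  obtain ⟨c₁, hζc₁, hc₁⟩ := exists_between (lt_min hc (by linarith : ζ < 2 * ζ))
  obtain ⟨c₀, hc₀, hc₀ζ⟩ := exists_between (by linarith [min_le_right c (2 * ζ)] : c₁ / 2 < ζ)
  have h2k : Tendsto (fun k : ℕ => 2 * k + 1) atTop atTop :=
    tendsto_atTop_mono (fun k => by simp only [id]; omega) tendsto_id
  filter_upwards [eventually_exp_le_of_tendsto hζ (fun _ => ENNReal.toReal_nonneg) hζpos hζc₁,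
    h2k.eventually (eventually_le_exp_of_tendsto hζ hc₀ζ),
    eventually_two_mul_exp_le (hc₁.trans_le (min_le_left _ _)),
    eventually_two_mul_exp_le (by linarith : c₁ < 2 * c₀)] with k h₁ h₂ h₃ h₄
  have hmono : exp (-(c₀ * ((2 * k + 1 : ℕ) : ℝ))) ≤ exp (-(2 * c₀ * k)) :=
    exp_le_exp.2 (by push_cast; nlinarith)
  have := measureReal_clusterGE_sub_le (μ := μ) (origin d) k
  simp only [measureReal_def] at this ⊢
  linarith

theorem IsBernoulliPerc.tendsto_measure_le_largest (hμ : IsBernoulliPerc μ p) (hζpos : 0 < ζ)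
    (hζ : Tendsto (fun k : ℕ => -(1 / (k : ℝ)) *
      log ((μ (clusterGE (origin d) k)).toReal)) atTop (nhds ζ)) {a : ℝ} (ha : d / ζ < a) :
    Tendsto (fun m : ℕ => μ {ω | a * log m ≤ largest d m ω}) atTop (nhds 0) := by
  have := hμ.1
  have ha0 : 0 < a := lt_of_le_of_lt (by positivity) ha
  obtain ⟨c, hdc, hcζ⟩ := exists_between ((div_lt_iff₀ ha0).2 ((div_lt_iff₀' hζpos).1 ha))
  have hc0 : 0 < c := lt_of_le_of_lt (by positivity) hdc
  have hk : Tendsto (fun m : ℕ => ⌈a * log m⌉₊) atTop atTop :=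
    tendsto_nat_ceil_atTop.comp
      ((tendsto_log_atTop.comp tendsto_natCast_atTop_atTop).const_mul_atTop ha0)
  refine tendsto_measure_zero_of_measureReal_le ((tendsto_rpow_neg_atTop
    (by linarith [(div_lt_iff₀ ha0).1 hdc] : 0 < c * a - d)).comp tendsto_natCast_atTop_atTop) ?_
  filter_upwards [hk.eventually (eventually_le_exp_of_tendsto hζ hcζ),
    hk.eventually_ge_atTop 1, eventually_gt_atTop 0] with m hP hk1 hm
  have hm0 : (0 : ℝ) < m := by exact_mod_cast hm
  calc μ.real {ω | a * log m ≤ largest d m ω}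
      ≤ μ.real {ω | ⌈a * log m⌉₊ ≤ largest d m ω} :=
        measureReal_mono fun ω hω => Nat.ceil_le.2 hω
    _ ≤ m ^ d * μ.real (clusterGE (origin d) ⌈a * log m⌉₊) := hμ.measureReal_le_largest_le hk1
    _ ≤ m ^ d * exp (-(c * (a * log m))) := by
        refine mul_le_mul_of_nonneg_left (hP.trans (exp_le_exp.2 ?_)) (by positivity)
        nlinarith [Nat.le_ceil (a * log m)]
    _ = (m : ℝ) ^ (-(c * a - d)) := by
        rw [← rpow_natCast, rpow_def_of_pos hm0, rpow_def_of_pos hm0, ← exp_add]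
        ring_nf

theorem IsBernoulliPerc.tendsto_measure_largest_lt (hμ : IsBernoulliPerc μ p) (hζpos : 0 < ζ)
    (hζ : Tendsto (fun k : ℕ => -(1 / (k : ℝ)) *
      log ((μ (clusterGE (origin d) k)).toReal)) atTop (nhds ζ)) {b : ℝ} (hb : b < d / ζ) :
    Tendsto (fun m : ℕ => μ {ω | (largest d m ω : ℝ) < b * log m}) atTop (nhds 0) := by
  have := hμ.1
  rcases le_or_gt b 0 with hb0 | hb0
  · refine tendsto_measure_zero_of_measureReal_le tendsto_const_nhds
      (Eventually.of_forall fun m => ?_)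
    rw [show {ω | (largest d m ω : ℝ) < b * log m} = ∅ from Set.eq_empty_of_forall_notMem
      fun ω hω => (mul_nonpos_of_nonpos_of_nonneg hb0 (log_natCast_nonneg m)).not_gt
        ((Nat.cast_nonneg _).trans_lt hω), measureReal_empty]
  obtain ⟨c, hζc, hcb⟩ : ∃ c, ζ < c ∧ c < d / b :=
    exists_between ((lt_div_iff₀ hb0).2 (by linarith [(lt_div_iff₀ hζpos).1 hb]))
  set k := fun m : ℕ => ⌈b * log m⌉₊
  set n := fun m : ℕ => m / (4 * k m + 3)
  have hk : Tendsto k atTop atTop :=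
    tendsto_nat_ceil_atTop.comp
      ((tendsto_log_atTop.comp tendsto_natCast_atTop_atTop).const_mul_atTop hb0)
  refine tendsto_measure_zero_of_measureReal_le
    (g := fun m => exp (-((n m : ℝ) ^ d * exp (-(c * k m)))))
    (tendsto_exp_neg_atTop_nhds_zero.comp (tendsto_div_ceil_log_pow_mul_exp hb0 (hζpos.trans hζc)
      (by linarith [(lt_div_iff₀ hb0).1 hcb]))) ?_
  filter_upwards [hk.eventually (hμ.eventually_exp_le_measureReal_clusterBetween hζpos hζ hζc)]
    with m hq
  set q := μ.real (clusterBetween (origin d) (k m))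
  calc μ.real {ω | (largest d m ω : ℝ) < b * log m}
      ≤ μ.real {ω | largest d m ω < k m} :=
        measureReal_mono fun ω (hω : (largest d m ω : ℝ) < b * log m) =>
          Nat.cast_lt.1 (hω.trans_le (Nat.le_ceil _))
    _ ≤ (1 - q) ^ (n m ^ d) := hμ.measureReal_largest_lt_le (Nat.mul_div_le m _)
    _ ≤ exp (-q) ^ (n m ^ d) :=
        pow_le_pow_left₀ (sub_nonneg.2 measureReal_le_one) (one_sub_le_exp_neg q) _
    _ ≤ exp (-((n m : ℝ) ^ d * exp (-(c * k m)))) := by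
        rw [← exp_nat_mul]
        push_cast
        exact exp_le_exp.2 (by nlinarith [pow_nonneg (Nat.cast_nonneg (n m) : (0 : ℝ) ≤ n m) d])

lemma le_or_lt_mul_of_lt_abs_div_sub {t L r ε : ℝ} (hL : 0 < L) (h : ε < |t / L - r|) :
    (r + ε) * L ≤ t ∨ t < (r - ε) * L := by
  rcases lt_abs.1 h with h | h
  · exact Or.inl ((lt_div_iff₀ hL).1 (by linarith)).le
  · exact Or.inr ((div_lt_iff₀ hL).1 (by linarith))

end Tails

end Perc

theorem stmt6_general (d : ℕ) (p ζ : ℝ)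
    (μ : Measure (Perc.Vertex d → Bool)) (hμ : Perc.IsBernoulliPerc μ p)
    (hζpos : 0 < ζ)
    (hζ : Tendsto (fun k : ℕ => -(1 / (k : ℝ)) *
        Real.log ((μ (Perc.clusterGE (Perc.origin d) k)).toReal)) atTop (nhds ζ)) :
    ∀ ε > 0, Tendsto (fun m : ℕ =>
      μ {ω | ε < |(Perc.largest d m ω : ℝ) / Real.log m - (d : ℝ) / ζ|})
      atTop (nhds 0) := by
  intro ε hε
  have hupper := hμ.tendsto_measure_le_largest hζpos hζ (lt_add_of_pos_right _ hε)
  have hlower := hμ.tendsto_measure_largest_lt hζpos hζ (sub_lt_self _ hε)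
  refine tendsto_of_tendsto_of_tendsto_of_le_of_le' tendsto_const_nhds
    (by simpa using hupper.add hlower) (Eventually.of_forall fun _ => zero_le) ?_
  filter_upwards [eventually_gt_atTop 1] with m hm
  refine (measure_mono fun ω hω => ?_).trans (measure_union_le _ _)
  exact Perc.le_or_lt_mul_of_lt_abs_div_sub (Real.log_pos (by exact_mod_cast hm)) hω

/-- S_m / log m → d / ζ_p in probability, subcritical. -/
theorem stmt6 (d : ℕ) (hd : 1 ≤ d) (p ζ : ℝ) (hp : 0 < p) (hpc : p < Perc.pc d)
    (μ : Measure (Perc.Vertex d → Bool)) (hμ : Perc.IsBernoulliPerc μ p)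
    (hζpos : 0 < ζ)
    (hζ : Tendsto (fun k : ℕ => -(1 / (k : ℝ)) *
        Real.log ((μ (Perc.clusterGE (Perc.origin d) k)).toReal)) atTop (nhds ζ)) :
    ∀ ε > 0, Tendsto (fun m : ℕ =>
      μ {ω | ε < |(Perc.largest d m ω : ℝ) / Real.log m - (d : ℝ) / ζ|})
      atTop (nhds 0) :=
  stmt6_general d p ζ μ hμ hζpos hζ
end

section
/- In the coin-tossing interpretation of one-dimensional site percolation with parameter p ∈ (0,1), let S_m be the length of the longest run of successes among m i.i.d. Bernoulli(p) trials. Then S_m / log m → 1/log(1/p) almost surely as m → ∞. -/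
/-!
Upper bound: a run of length `⌈(1 + ε) log_{1/p} i⌉` starting at `i` has probability at most
`i ^ (-(1 + ε))`, which is summable, so by Borel–Cantelli almost surely only finitely many such
runs occur; since the thresholds grow with `i`, every run ending before `m` is then shorter than
`(1 + ε) log_{1/p} m` plus a constant.

Lower bound: with `k = ⌊(1 - ε) log_{1/p} m⌋`, if `S_m < k` then none of the `m / k` disjoint
blocks of length `k` in `[0, m)` consists of successes. By independence this has probability
`(1 - p ^ k) ^ (m / k) ≤ exp (-(m / k) p ^ k) ≤ m ^ (-2)`, again summable.

Letting `ε → 0` along a sequence gives `S_m / log_{1/p} m → 1`.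
-/

open MeasureTheory ProbabilityTheory Filter Set
open scoped ENNReal

noncomputable def bernoulliWeight (p : ℝ) (b : Bool) : ℝ≥0∞ :=
  if b then ENNReal.ofReal p else ENNReal.ofReal (1 - p)

def IsBernoulliSeq {ι : Type*} (p : ℝ) (μ : Measure (ι → Bool)) : Prop :=
  ∀ (s : Finset ι) (f : ι → Bool),
    μ {ω | ∀ i ∈ s, ω i = f i} = ∏ i ∈ s, bernoulliWeight p (f i)

lemma measurableSet_cylinder {ι : Type*} (s : Finset ι) (f : ι → Bool) :
    MeasurableSet {ω : ι → Bool | ∀ i ∈ s, ω i = f i} := by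
  have : {ω : ι → Bool | ∀ i ∈ s, ω i = f i} = (s : Set ι).pi fun i => {f i} := by
    ext; simp
  exact this ▸ .pi s.countable_toSet fun _ _ => .of_discrete

open Classical in
lemma setOf_forall_eq_inter_pi_insert {ι : Type*} {a : ι} {r : Finset ι} (har : a ∉ r)
    (s : Finset ι) (f : ι → Bool) (t : ι → Set Bool) :
    {ω | ∀ i ∈ r, ω i = f i} ∩ ((insert a s : Finset ι) : Set ι).pi t =
      ⋃ b ∈ Finset.univ.filter (· ∈ t a),
        {ω | ∀ i ∈ insert a r, ω i = Function.update f a b i} ∩ (s : Set ι).pi t := by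
  ext ω
  simp only [Finset.coe_insert, Set.mem_inter_iff, Set.mem_ofPred_eq, Set.mem_pi,
    Set.mem_insert_iff, Set.mem_iUnion, Finset.mem_insert, Finset.mem_filter, Finset.mem_univ,
    true_and, exists_prop, forall_eq_or_imp, Function.update_self]
  constructor
  · rintro ⟨hr, ha, hs⟩
    refine ⟨ω a, ha, ⟨rfl, fun i hi => ?_⟩, hs⟩
    rw [Function.update_of_ne (ne_of_mem_of_not_mem hi har)]
    exact hr i hi
  · rintro ⟨b, hb, ⟨rfl, hr⟩, hs⟩
    refine ⟨fun i hi => ?_, hb, hs⟩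
    rw [hr i hi, Function.update_of_ne (ne_of_mem_of_not_mem hi har)]

namespace IsBernoulliSeq

variable {ι : Type*} {p : ℝ} {μ : Measure (ι → Bool)}

-- The fixed coordinates `r` make the induction on `s` go through.
theorem measure_cylinder_inter_pi (hμ : IsBernoulliSeq p μ) {r s : Finset ι} (hrs : Disjoint r s)
    (f : ι → Bool) (t : ι → Set Bool) :
    μ ({ω | ∀ i ∈ r, ω i = f i} ∩ (s : Set ι).pi t) =
      (∏ i ∈ r, bernoulliWeight p (f i)) *
        ∏ i ∈ s, ∑ b, (t i).indicator (bernoulliWeight p) b := by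
  classical
  induction s using Finset.induction_on generalizing r f with
  | empty => simpa using hμ r f
  | insert a s ha ih =>
    have har : a ∉ r := Finset.disjoint_right.1 hrs (Finset.mem_insert_self a s)
    have hrs' : Disjoint (insert a r) s := by
      rw [Finset.disjoint_insert_left]
      exact ⟨ha, Finset.disjoint_of_subset_right (Finset.subset_insert a s) hrs⟩
    have hdisj : (Finset.univ.filter (· ∈ t a) : Set Bool).PairwiseDisjoint fun b =>
        {ω | ∀ i ∈ insert a r, ω i = Function.update f a b i} ∩ (s : Set ι).pi t := by
      intro b _ b' _ hbb'
      refine Set.disjoint_left.2 fun ω hω hω' => hbb' ?_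
      simpa using (hω.1 a (Finset.mem_insert_self a r)).symm.trans
        (hω'.1 a (Finset.mem_insert_self a r))
    have hupd : ∀ b, ∏ i ∈ r, bernoulliWeight p (Function.update f a b i) =
        ∏ i ∈ r, bernoulliWeight p (f i) := fun b =>
      Finset.prod_congr rfl fun i hi => by rw [Function.update_of_ne (ne_of_mem_of_not_mem hi har)]
    rw [setOf_forall_eq_inter_pi_insert har, measure_biUnion_finset hdisj fun b _ =>
      (measurableSet_cylinder _ _).inter (.pi s.countable_toSet fun _ _ => .of_discrete)]
    simp only [ih hrs', Finset.prod_insert har, Finset.prod_insert ha, Function.update_self,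
      Finset.sum_filter, Set.indicator_apply, hupd, Finset.mul_sum, Finset.sum_mul]
    refine Finset.sum_congr rfl fun b _ => ?_
    split_ifs <;> ring

theorem measure_pi (hμ : IsBernoulliSeq p μ) (s : Finset ι) (t : ι → Set Bool) :
    μ ((s : Set ι).pi t) = ∏ i ∈ s, ∑ b, (t i).indicator (bernoulliWeight p) b := by
  simpa using hμ.measure_cylinder_inter_pi (Finset.disjoint_empty_left s) (fun _ => true) t

theorem iIndepFun (hμ : IsBernoulliSeq p μ) :
    iIndepFun (fun i (ω : ι → Bool) => ω i) μ := by
  rw [iIndepFun_iff_measure_inter_preimage_eq_mul]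
  intro S sets _
  have hpi : ∀ T : Finset ι,
      ⋂ i ∈ T, (fun ω : ι → Bool => ω i) ⁻¹' sets i = (T : Set ι).pi sets :=
    fun T => by ext; simp
  rw [hpi, hμ.measure_pi]
  refine Finset.prod_congr rfl fun i _ => ?_
  simpa [hpi] using (hμ.measure_pi {i} sets).symm

end IsBernoulliSeq

lemma setOf_run_eq_cylinder (i k : ℕ) :
    {ω : ℕ → Bool | ∀ j < k, ω (i + j) = true} =
      {ω | ∀ j ∈ Finset.Ico i (i + k), ω j = (fun _ => true) j} := by
  ext ω
  refine ⟨fun h j hj => ?_, fun h j hj => h _ (Finset.mem_Ico.2 ⟨by omega, by omega⟩)⟩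
  obtain ⟨hij, hjk⟩ := Finset.mem_Ico.1 hj
  simpa [Nat.add_sub_cancel' hij] using h (j - i) (by omega)

lemma ProbabilityTheory.iIndepFun.measure_inter_eq_mul_of_dependsOn {ι β : Type*}
    [MeasurableSpace β] [Countable β] [MeasurableSingletonClass β] {μ : Measure (ι → β)}
    (h : iIndepFun (fun i (ω : ι → β) => ω i) μ) {S T : Finset ι} (hST : Disjoint S T)
    {A B : Set (ι → β)} (hA : DependsOn (· ∈ A) (S : Set ι))
    (hB : DependsOn (· ∈ B) (T : Set ι)) :
    μ (A ∩ B) = μ A * μ B := by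
  obtain ⟨gA, hgA⟩ := dependsOn_iff_exists_comp.1 hA
  obtain ⟨gB, hgB⟩ := dependsOn_iff_exists_comp.1 hB
  have hA' : A = (fun ω (i : S) => ω i) ⁻¹' {x | gA x} :=
    Set.ext fun ω => iff_of_eq (congrFun hgA ω)
  have hB' : B = (fun ω (i : T) => ω i) ⁻¹' {x | gB x} :=
    Set.ext fun ω => iff_of_eq (congrFun hgB ω)
  rw [hA', hB']
  exact (h.indepFun_finset S T hST fun i => measurable_pi_apply i).measure_inter_preimage_eq_mul _ _
    .of_discrete .of_discrete

namespace IsBernoulliSeq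

variable {p : ℝ} {μ : Measure (ℕ → Bool)}

theorem measure_run (hμ : IsBernoulliSeq p μ) (i k : ℕ) :
    μ {ω | ∀ j < k, ω (i + j) = true} = ENNReal.ofReal p ^ k := by
  rw [setOf_run_eq_cylinder, hμ]
  simp [bernoulliWeight]

theorem measure_exists_eq_false (hμ : IsBernoulliSeq p μ) (i k : ℕ) :
    μ {ω | ∃ j < k, ω (i + j) = false} = 1 - ENNReal.ofReal p ^ k := by
  have := hμ.iIndepFun.isProbabilityMeasure
  have hcompl : {ω : ℕ → Bool | ∃ j < k, ω (i + j) = false} =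
      {ω | ∀ j < k, ω (i + j) = true}ᶜ := by
    ext; simp
  have hmeas : MeasurableSet {ω : ℕ → Bool | ∀ j < k, ω (i + j) = true} :=
    setOf_run_eq_cylinder i k ▸ measurableSet_cylinder _ _
  rw [hcompl, measure_compl hmeas (measure_ne_top _ _), measure_univ, hμ.measure_run]

theorem measure_forall_exists_block_eq_false (hμ : IsBernoulliSeq p μ) (k N : ℕ) :
    μ {ω | ∀ b < N, ∃ j < k, ω (b * k + j) = false} = (1 - ENNReal.ofReal p ^ k) ^ N := by
  have := hμ.iIndepFun.isProbabilityMeasure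
  induction N with
  | zero => simp
  | succ N ih =>
    have hsplit : {ω : ℕ → Bool | ∀ b < N + 1, ∃ j < k, ω (b * k + j) = false} =
        {ω | ∀ b < N, ∃ j < k, ω (b * k + j) = false} ∩
          {ω | ∃ j < k, ω (N * k + j) = false} := by
      ext; exact Nat.forall_lt_succ_right
    have hfirst :
        DependsOn (· ∈ {ω : ℕ → Bool | ∀ b < N, ∃ j < k, ω (b * k + j) = false})
        (Finset.range (N * k) : Set ℕ) := by
      intro ω ω' h
      refine propext <| forall₂_congr fun b hb =>
        exists_congr fun j => and_congr_right fun hj => ?_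
      rw [h (b * k + j) (Finset.mem_range.2 ?_)]
      nlinarith
    have hlast : DependsOn (· ∈ {ω : ℕ → Bool | ∃ j < k, ω (N * k + j) = false})
        (Finset.Ico (N * k) (N * k + k) : Set ℕ) := by
      intro ω ω' h
      refine propext <| exists_congr fun j => and_congr_right fun hj => ?_
      rw [h (N * k + j) (Finset.mem_Ico.2 ⟨by omega, by omega⟩)]
    rw [hsplit, hμ.iIndepFun.measure_inter_eq_mul_of_dependsOn
      (Finset.range_eq_Ico (N * k) ▸ Finset.Ico_disjoint_Ico_consecutive 0 (N * k) _)
      hfirst hlast, ih, hμ.measure_exists_eq_false, pow_succ]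

end IsBernoulliSeq

noncomputable def longestRun (ω : ℕ → Bool) (m : ℕ) : ℕ :=
  sSup {k | ∃ i, i + k ≤ m ∧ ∀ j < k, ω (i + j) = true}

section longestRun

variable {ω : ℕ → Bool}

lemma bddAbove_runs (ω : ℕ → Bool) (m : ℕ) :
    BddAbove {k | ∃ i, i + k ≤ m ∧ ∀ j < k, ω (i + j) = true} :=
  ⟨m, by rintro k ⟨i, h, -⟩; omega⟩

lemma le_longestRun {i k m : ℕ} (h : i + k ≤ m) (hrun : ∀ j < k, ω (i + j) = true) :
    k ≤ longestRun ω m :=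
  le_csSup (bddAbove_runs ω m) ⟨i, h, hrun⟩

lemma exists_run_longestRun (ω : ℕ → Bool) (m : ℕ) :
    ∃ i, i + longestRun ω m ≤ m ∧ ∀ j < longestRun ω m, ω (i + j) = true :=
  Nat.sSup_mem (s := {k | ∃ i, i + k ≤ m ∧ ∀ j < k, ω (i + j) = true})
    ⟨0, 0, by omega, fun j hj => absurd hj (Nat.not_lt_zero j)⟩ (bddAbove_runs ω m)

lemma longestRun_lt_add_of_forall_ge {K : ℕ → ℕ} (hK : Monotone K) {I : ℕ}
    (h : ∀ i ≥ I, ¬ ∀ j < K i, ω (i + j) = true) (m : ℕ) : longestRun ω m < K m + I := by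
  obtain ⟨i, him, hrun⟩ := exists_run_longestRun ω m
  by_contra! hge
  -- the last `K m` entries of a longest run form a run starting at `i' ≥ I`
  set i' := i + longestRun ω m - K m
  refine h i' (by omega) fun j hj => ?_
  have hKi' : K i' ≤ K m := hK (by omega)
  simpa [show i + (i' - i + j) = i' + j by omega] using hrun (i' - i + j) (by omega)

lemma setOf_longestRun_lt_subset (k m : ℕ) :
    {ω : ℕ → Bool | longestRun ω m < k} ⊆
      {ω | ∀ b < m / k, ∃ j < k, ω (b * k + j) = false} := by
  intro ω hω b hb
  by_contra! hrun
  have hk : 0 < k := Nat.pos_of_ne_zero fun hk => by simp [hk] at hb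
  have hbm : b * k + k ≤ m := by
    simpa [add_mul] using (Nat.le_div_iff_mul_le hk).1 hb
  exact absurd (le_longestRun hbm fun j hj => by simpa using hrun j hj) (not_le.2 hω)

end longestRun

lemma ae_eventually_notMem_of_le_ofReal {α : Type*} [MeasurableSpace α] {μ : Measure α}
    {s : ℕ → Set α} {f : ℕ → ℝ} (hf : Summable f)
    (hs : ∀ᶠ n in atTop, μ (s n) ≤ ENNReal.ofReal (f n)) :
    ∀ᵐ x ∂μ, ∀ᶠ n in atTop, x ∉ s n := by
  obtain ⟨M, hM⟩ := eventually_atTop.1 hs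
  have hsum : ∑' n, μ (s (n + M)) ≠ ⊤ :=
    ne_top_of_le_ne_top ((summable_nat_add_iff M).2 hf).tsum_ofReal_ne_top
      (ENNReal.tsum_le_tsum fun n => hM _ (Nat.le_add_left M n))
  filter_upwards [ae_eventually_notMem hsum] with x hx
  rw [← Filter.map_add_atTop_eq_nat M]
  exact hx

section Asymptotics

open Real

lemma logb_natCast_nonneg {b : ℝ} (hb : 1 < b) (n : ℕ) : 0 ≤ logb b n :=
  div_nonneg (log_natCast_nonneg n) (log_nonneg hb.le)

lemma monotone_logb_natCast {b : ℝ} (hb : 1 < b) : Monotone fun n : ℕ => logb b n := by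
  intro i j hij
  rcases Nat.eq_zero_or_pos i with rfl | hi
  · simpa using logb_natCast_nonneg hb j
  · exact logb_le_logb_of_le hb (Nat.cast_pos.2 hi) (Nat.cast_le.2 hij)

variable {p x : ℝ}

lemma rpow_mul_logb_one_div (hp : p ∈ Ioo 0 1) (hx : 0 < x) (y : ℝ) :
    p ^ (y * logb (1 / p) x) = x ^ (-y) := by
  have hlog : log p ≠ 0 := (log_neg hp.1 hp.2).ne
  rw [rpow_def_of_pos hp.1, rpow_def_of_pos hx, logb, one_div, log_inv]
  congr 1
  field_simp

lemma pow_le_rpow_neg_of_mul_logb_le (hp : p ∈ Ioo 0 1) (hx : 0 < x) {y : ℝ} {n : ℕ}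
    (h : y * logb (1 / p) x ≤ n) : p ^ n ≤ x ^ (-y) := by
  rw [← rpow_mul_logb_one_div hp hx, ← rpow_natCast]
  exact rpow_le_rpow_of_exponent_ge hp.1 hp.2.le h

lemma rpow_neg_le_pow_of_le_mul_logb (hp : p ∈ Ioo 0 1) (hx : 0 < x) {y : ℝ} {n : ℕ}
    (h : n ≤ y * logb (1 / p) x) : x ^ (-y) ≤ p ^ n := by
  rw [← rpow_mul_logb_one_div hp hx, ← rpow_natCast]
  exact rpow_le_rpow_of_exponent_ge hp.1 hp.2.le h

lemma eventually_log_mul_logb_le_rpow {b ε : ℝ} (hb : 1 < b) (hε : 0 < ε) :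
    ∀ᶠ x : ℝ in atTop, (2 * log x + 1) * logb b x ≤ x ^ ε := by
  have hlogb : 0 < log b := log_pos hb
  filter_upwards [(isLittleO_log_rpow_rpow_atTop 2 hε).bound (by positivity : 0 < log b / 3),
    eventually_ge_atTop (exp 1)] with x hx hxe
  have hx0 : 0 < x := (exp_pos 1).trans_le hxe
  have hlog1 : 1 ≤ log x := by rwa [le_log_iff_exp_le hx0]
  rw [norm_of_nonneg (by positivity), norm_of_nonneg (by positivity), rpow_two] at hx
  rw [logb, ← mul_div_assoc, div_le_iff₀ hlogb]
  nlinarith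

lemma one_sub_pow_le_exp_neg_mul {x : ℝ} (hx : x ≤ 1) (N : ℕ) :
    (1 - x) ^ N ≤ exp (-(N * x)) := by
  calc (1 - x) ^ N ≤ exp (-x) ^ N :=
        pow_le_pow_left₀ (by linarith) (by linarith [add_one_le_exp (-x)]) N
    _ = exp (-(N * x)) := by rw [← exp_nat_mul]; ring_nf

lemma eventually_one_sub_pow_pow_div_le (hp : p ∈ Ioo 0 1) {ε : ℝ} (hε0 : 0 < ε)
    (hε1 : ε < 1) :
    ∀ᶠ m : ℕ in atTop,
      (1 - p ^ ⌊(1 - ε) * logb (1 / p) m⌋₊) ^ (m / ⌊(1 - ε) * logb (1 / p) m⌋₊)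
        ≤ (m : ℝ) ^ (-2 : ℝ) := by
  have hb : 1 < 1 / p := one_lt_one_div hp.1 hp.2
  have hk : Tendsto (fun m : ℕ => ⌊(1 - ε) * logb (1 / p) m⌋₊) atTop atTop :=
    tendsto_nat_floor_atTop.comp <| ((tendsto_logb_atTop hb).comp
      tendsto_natCast_atTop_atTop).const_mul_atTop (by linarith)
  filter_upwards [hk.eventually_ge_atTop 1, eventually_ge_atTop 1,
    tendsto_natCast_atTop_atTop.eventually (eventually_log_mul_logb_le_rpow hb hε0)]
    with m hk1 hm1 hlog
  set L := logb (1 / p) m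
  set k := ⌊(1 - ε) * L⌋₊
  have hm0 : (0 : ℝ) < m := by exact_mod_cast hm1
  have hL0 : 0 ≤ L := logb_natCast_nonneg hb m
  have hk0 : (0 : ℝ) < k := by exact_mod_cast hk1
  have hkL : (k : ℝ) ≤ L :=
    (Nat.floor_le (by positivity)).trans (by nlinarith)
  have hx0 : 0 < p ^ k := pow_pos hp.1 k
  have hx1 : p ^ k ≤ 1 := pow_le_one₀ hp.1.le hp.2.le
  have hx : (m : ℝ) ^ (-(1 - ε)) ≤ p ^ k :=
    rpow_neg_le_pow_of_le_mul_logb hp hm0 (Nat.floor_le (by positivity))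
  have hmx : (m : ℝ) ^ ε ≤ m * p ^ k := by
    calc (m : ℝ) ^ ε = m * (m : ℝ) ^ (-(1 - ε)) := by
          rw [← rpow_one_add' hm0.le (by linarith)]; norm_num
      _ ≤ m * p ^ k := by gcongr
  have hN : (m : ℝ) / k - 1 < (m / k : ℕ) := by
    rw [← Nat.floor_div_eq_div (K := ℝ)]; exact Nat.sub_one_lt_floor _
  have hNx : 2 * log m ≤ (m / k : ℕ) * p ^ k := by
    have : 2 * log m + 1 ≤ m * p ^ k / k := by
      rw [le_div_iff₀ hk0]
      have hlog0 : 0 ≤ 2 * log m + 1 := by linarith [log_natCast_nonneg m]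
      nlinarith [mul_le_mul_of_nonneg_left hkL hlog0]
    have : ((m : ℝ) / k - 1) * p ^ k ≤ (m / k : ℕ) * p ^ k := by gcongr
    have : ((m : ℝ) / k - 1) * p ^ k = m * p ^ k / k - p ^ k := by ring
    linarith
  calc (1 - p ^ k) ^ (m / k) ≤ exp (-((m / k : ℕ) * p ^ k)) := one_sub_pow_le_exp_neg_mul hx1 _
    _ ≤ exp (-(2 * log m)) := exp_le_exp.2 (by linarith)
    _ = (m : ℝ) ^ (-2 : ℝ) := by rw [rpow_def_of_pos hm0]; ring_nf

end Asymptotics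

lemma tendsto_div_of_abs_sub_le {α : Type*} {l : Filter α} {u g : α → ℝ}
    (hg : Tendsto g l atTop) {ε : ℕ → ℝ} (hε : Tendsto ε atTop (nhds 0))
    (h : ∀ n, ∃ C, ∀ᶠ x in l, |u x - g x| ≤ ε n * g x + C) :
    Tendsto (fun x => u x / g x) l (nhds 1) := by
  have ho : (fun x => u x - g x) =o[l] g := by
    refine Asymptotics.IsLittleO.of_bound fun c hc => ?_
    obtain ⟨n, hn⟩ := (hε.eventually (gt_mem_nhds (half_pos hc))).exists
    obtain ⟨C, hC⟩ := h n
    filter_upwards [hC, hg.eventually_ge_atTop (2 * C / c), hg.eventually_ge_atTop 0]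
      with x hx hxC hx0
    rw [Real.norm_eq_abs, Real.norm_of_nonneg hx0]
    rw [div_le_iff₀ hc] at hxC
    nlinarith
  have hlim := ho.tendsto_div_nhds_zero.const_add 1
  rw [add_zero] at hlim
  refine hlim.congr' ?_
  filter_upwards [hg.eventually_gt_atTop 0] with x hx
  field_simp
  ring

namespace IsBernoulliSeq

open Real

variable {p : ℝ} {μ : Measure (ℕ → Bool)}

theorem ae_exists_longestRun_le (hμ : IsBernoulliSeq p μ) (hp : p ∈ Ioo 0 1) {ε : ℝ}
    (hε : 0 < ε) :
    ∀ᵐ ω ∂μ, ∃ C : ℝ, ∀ m : ℕ,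
      (longestRun ω m : ℝ) ≤ (1 + ε) * logb (1 / p) m + C := by
  have hb : 1 < 1 / p := one_lt_one_div hp.1 hp.2
  set K : ℕ → ℕ := fun i => ⌈(1 + ε) * logb (1 / p) i⌉₊
  have hK : Monotone K := fun i j hij =>
    Nat.ceil_mono (mul_le_mul_of_nonneg_left (monotone_logb_natCast hb hij) (by linarith))
  have hA : ∀ᶠ i in atTop, μ {ω | ∀ j < K i, ω (i + j) = true}
      ≤ ENNReal.ofReal ((i : ℝ) ^ (-(1 + ε))) := by
    filter_upwards [eventually_ge_atTop 1] with i hi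
    rw [hμ.measure_run, ← ENNReal.ofReal_pow hp.1.le]
    exact ENNReal.ofReal_le_ofReal
      (pow_le_rpow_neg_of_mul_logb_le hp (by exact_mod_cast hi) (Nat.le_ceil _))
  filter_upwards [ae_eventually_notMem_of_le_ofReal
    (Real.summable_nat_rpow.2 (by linarith)) hA] with ω hω
  obtain ⟨I, hI⟩ := eventually_atTop.1 hω
  refine ⟨I + 1, fun m => ?_⟩
  have hrun : (longestRun ω m : ℝ) < K m + I := by
    exact_mod_cast longestRun_lt_add_of_forall_ge hK hI m
  have hKm : (K m : ℝ) < (1 + ε) * logb (1 / p) m + 1 :=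
    Nat.ceil_lt_add_one (mul_nonneg (by linarith) (logb_natCast_nonneg hb m))
  linarith

theorem ae_eventually_le_longestRun (hμ : IsBernoulliSeq p μ) (hp : p ∈ Ioo 0 1) {ε : ℝ}
    (hε0 : 0 < ε) (hε1 : ε < 1) :
    ∀ᵐ ω ∂μ, ∀ᶠ m : ℕ in atTop,
      (1 - ε) * logb (1 / p) m - 1 ≤ longestRun ω m := by
  set k : ℕ → ℕ := fun m => ⌊(1 - ε) * logb (1 / p) m⌋₊
  have hbound : ∀ᶠ m in atTop,
      μ {ω | longestRun ω m < k m} ≤ ENNReal.ofReal ((m : ℝ) ^ (-2 : ℝ)) := by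
    filter_upwards [eventually_one_sub_pow_pow_div_le hp hε0 hε1] with m hm
    have hx1 : p ^ k m ≤ 1 := pow_le_one₀ hp.1.le hp.2.le
    calc μ {ω | longestRun ω m < k m}
        ≤ μ {ω | ∀ b < m / k m, ∃ j < k m, ω (b * k m + j) = false} :=
          measure_mono (setOf_longestRun_lt_subset _ _)
      _ = ENNReal.ofReal ((1 - p ^ k m) ^ (m / k m)) := by
          rw [hμ.measure_forall_exists_block_eq_false, ENNReal.ofReal_pow (by linarith),
            ENNReal.ofReal_sub _ (pow_pos hp.1 _).le, ENNReal.ofReal_one,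
            ENNReal.ofReal_pow hp.1.le]
      _ ≤ ENNReal.ofReal ((m : ℝ) ^ (-2 : ℝ)) := ENNReal.ofReal_le_ofReal hm
  filter_upwards [ae_eventually_notMem_of_le_ofReal
    (Real.summable_nat_rpow.2 (by norm_num)) hbound] with ω hω
  filter_upwards [hω] with m hm
  have hfloor : (1 - ε) * logb (1 / p) m - 1 < k m := Nat.sub_one_lt_floor _
  have hk : (k m : ℝ) ≤ longestRun ω m := by exact_mod_cast not_lt.1 hm
  linarith

end IsBernoulliSeq

theorem stmt7_general (p : ℝ) (hp : p ∈ Set.Ioo (0 : ℝ) 1)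
    (μ : Measure (ℕ → Bool))
    (hiid : ∀ (s : Finset ℕ) (f : ℕ → Bool),
      μ {ω | ∀ i ∈ s, ω i = f i}
        = ∏ i ∈ s, (if f i then ENNReal.ofReal p else ENNReal.ofReal (1 - p))) :
    ∀ᵐ ω ∂μ, Tendsto (fun m : ℕ =>
      ((sSup {k : ℕ | ∃ i, i + k ≤ m ∧ ∀ j < k, ω (i + j) = true} : ℕ) : ℝ)
        / Real.log m)
      atTop (nhds (1 / Real.log (1 / p))) := by
  have hμ : IsBernoulliSeq p μ := hiid
  have hb : 1 < 1 / p := one_lt_one_div hp.1 hp.2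
  set ε : ℕ → ℝ := fun n => 1 / ((n : ℝ) + 2)
  have hε : ∀ n, 0 < ε n ∧ ε n < 1 := fun n =>
    ⟨by positivity, by rw [div_lt_one (by positivity)]; linarith [n.cast_nonneg (α := ℝ)]⟩
  have hε0 : Tendsto ε atTop (nhds 0) :=
    tendsto_const_nhds.div_atTop (tendsto_atTop_add_const_right _ 2 tendsto_natCast_atTop_atTop)
  have hbounds : ∀ᵐ ω ∂μ, ∀ n, ∃ C, ∀ᶠ m : ℕ in atTop,
      |(longestRun ω m : ℝ) - Real.logb (1 / p) m| ≤ ε n * Real.logb (1 / p) m + C := by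
    rw [ae_all_iff]
    intro n
    filter_upwards [hμ.ae_eventually_le_longestRun hp (hε n).1 (hε n).2,
      hμ.ae_exists_longestRun_le hp (hε n).1] with ω hlow ⟨C, hup⟩
    refine ⟨max C 1, ?_⟩
    filter_upwards [hlow] with m hm
    rw [abs_sub_le_iff]
    constructor <;> linarith [hup m, le_max_left C 1, le_max_right C 1]
  filter_upwards [hbounds] with ω hω
  have hlim := (tendsto_div_of_abs_sub_le (u := fun m => (longestRun ω m : ℝ))
    ((Real.tendsto_logb_atTop hb).comp tendsto_natCast_atTop_atTop) hε0 hω).div_const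
    (Real.log (1 / p))
  refine hlim.congr fun m => ?_
  simp only [Function.comp, Real.logb, div_div, div_mul_cancel₀ _ (Real.log_pos hb).ne']
  rfl

/-- Erdős–Rényi law for the longest run of successes. -/
theorem stmt7 (p : ℝ) (hp : p ∈ Set.Ioo (0 : ℝ) 1)
    (μ : Measure (ℕ → Bool)) (hprob : IsProbabilityMeasure μ)
    (hiid : ∀ (s : Finset ℕ) (f : ℕ → Bool),
      μ {ω | ∀ i ∈ s, ω i = f i}
        = ∏ i ∈ s, (if f i then ENNReal.ofReal p else ENNReal.ofReal (1 - p))) :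
    ∀ᵐ ω ∂μ, Tendsto (fun m : ℕ =>
      ((sSup {k : ℕ | ∃ i, i + k ≤ m ∧ ∀ j < k, ω (i + j) = true} : ℕ) : ℝ)
        / Real.log m)
      atTop (nhds (1 / Real.log (1 / p))) :=
  stmt7_general p hp μ hiid
end

section
/- Let F_0 be a distribution function with log \bar{F}_0(x) ~ -C x^b as x → ∞ for some b > 1, C > 0, and let F_θ be the tilted distribution with density e^{θx - Λ(θ)} with respect to F_0 (θ > 0 fixed). Then for any ε ∈ (0,1), \bar{F}_θ(t) ≤ \bar{F}_0((1-ε)t) for all sufficiently large t; consequently F_θ ∈ AEP(b, C) as well. -/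
open MeasureTheory Filter Set

lemma tail_ub (ν : Measure ℝ) [IsFiniteMeasure ν] (b C : ℝ) (hAEP : MemAEP ν b C)
    (C' : ℝ) (hC' : C' < C) :
    ∀ᶠ x in atTop, ν (Set.Ioi x) ≤ ENNReal.ofReal (Real.exp (-C' * x ^ b)) := by
  have h1 : ∀ᶠ x : ℝ in atTop, Real.log (survival ν x) / x ^ b < -C' :=
    hAEP.eventually_lt_const (by linarith)
  filter_upwards [h1, eventually_ge_atTop (1:ℝ)] with x hx hx1
  have hxb : (0:ℝ) < x ^ b := Real.rpow_pos_of_pos (by linarith) b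
  have hlog : Real.log (survival ν x) ≤ -C' * x ^ b := by
    rw [div_lt_iff₀ hxb] at hx; linarith
  have h0 : ν (Set.Ioi x) = ENNReal.ofReal (survival ν x) :=
    (ENNReal.ofReal_toReal (measure_ne_top ν _)).symm
  rw [h0]
  apply ENNReal.ofReal_le_ofReal
  rcases eq_or_lt_of_le (ENNReal.toReal_nonneg : 0 ≤ survival ν x) with h | h
  · have h' : survival ν x = 0 := h.symm
    rw [h']; positivity
  · calc survival ν x = Real.exp (Real.log (survival ν x)) := (Real.exp_log h).symm
      _ ≤ _ := Real.exp_le_exp.2 hlog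

lemma tail_lb (ν : Measure ℝ) [IsFiniteMeasure ν] (b C : ℝ) (hC : 0 < C) (hAEP : MemAEP ν b C)
    (C'' : ℝ) (hC'' : C < C'') :
    ∀ᶠ x in atTop, ENNReal.ofReal (Real.exp (-C'' * x ^ b)) ≤ ν (Set.Ioi x)
      ∧ 0 < survival ν x := by
  have h1 : ∀ᶠ x : ℝ in atTop, Real.log (survival ν x) / x ^ b < -C/2 :=
    hAEP.eventually_lt_const (by linarith)
  have h2 : ∀ᶠ x : ℝ in atTop, -C'' < Real.log (survival ν x) / x ^ b :=
    hAEP.eventually_const_lt (by linarith)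
  filter_upwards [h1, h2, eventually_ge_atTop (1:ℝ)] with x hx hx2 hx1
  have hxb : (0:ℝ) < x ^ b := Real.rpow_pos_of_pos (by linarith) b
  have hlogneg : Real.log (survival ν x) < 0 := by
    rw [div_lt_iff₀ hxb] at hx; nlinarith
  have hpos : 0 < survival ν x := by
    rcases eq_or_lt_of_le (ENNReal.toReal_nonneg : 0 ≤ survival ν x) with h | h
    · exfalso
      have h' : survival ν x = 0 := h.symm
      rw [h', Real.log_zero] at hlogneg; exact lt_irrefl _ hlogneg
    · exact h
  refine ⟨?_, hpos⟩
  have hlog : -C'' * x ^ b ≤ Real.log (survival ν x) := by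
    rw [lt_div_iff₀ hxb] at hx2; linarith
  have h0 : ν (Set.Ioi x) = ENNReal.ofReal (survival ν x) :=
    (ENNReal.ofReal_toReal (measure_ne_top ν _)).symm
  rw [h0]
  apply ENNReal.ofReal_le_ofReal
  calc Real.exp (-C'' * x ^ b) ≤ Real.exp (Real.log (survival ν x)) := Real.exp_le_exp.2 hlog
    _ = survival ν x := Real.exp_log hpos

lemma cover_Ioi (t : ℝ) : Set.Ioi t ⊆ ⋃ n : ℕ, Set.Ioc (t + n) (t + n + 1) := by
  intro x hx
  have hy : 0 < x - t := by simpa using hx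
  have hm1 : 1 ≤ ⌈x - t⌉₊ := Nat.one_le_ceil_iff.2 hy
  refine Set.mem_iUnion.2 ⟨⌈x - t⌉₊ - 1, ?_⟩
  have hc : ((⌈x - t⌉₊ - 1 : ℕ) : ℝ) = (⌈x - t⌉₊ : ℝ) - 1 := by
    push_cast [Nat.cast_sub hm1]; ring
  have h1 : x - t ≤ ⌈x - t⌉₊ := Nat.le_ceil _
  have h2 : (⌈x - t⌉₊ : ℝ) < (x - t) + 1 := Nat.ceil_lt_add_one hy.le
  constructor
  · rw [hc]; linarith
  · rw [hc]; linarith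

lemma exponent_bound (b C' θ Λ t : ℝ) (hb : 1 < b) (hC' : 0 < C') (ht : 1 ≤ t)
    (hts : 1 ≤ C' * t ^ (b - 1) - θ) (n : ℕ) :
    θ * (t + n + 1) - Λ - C' * (t + n) ^ b ≤ (θ * (t + 1) - Λ - C' * t ^ b) + n * (-1) := by
  have ht0 : (0:ℝ) < t := by linarith
  have htn : (0:ℝ) < t + n := by positivity
  have e1 : (t + n) ^ b = (t + n) ^ (b - 1) * (t + n) := by
    rw [show b = (b-1) + 1 by ring, Real.rpow_add_one htn.ne']
    ring_nf
  have e2 : t ^ b = t ^ (b - 1) * t := by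
    rw [show b = (b-1) + 1 by ring, Real.rpow_add_one ht0.ne']
    ring_nf
  have e3 : t ^ (b - 1) ≤ (t + n) ^ (b - 1) :=
    Real.rpow_le_rpow ht0.le (by linarith [Nat.cast_nonneg (α := ℝ) n]) (by linarith)
  have key : t ^ b + (n : ℝ) * t ^ (b - 1) ≤ (t + n) ^ b := by
    rw [e1, e2]
    nlinarith [Nat.cast_nonneg (α := ℝ) n]
  nlinarith [Nat.cast_nonneg (α := ℝ) n, Real.rpow_pos_of_pos ht0 (b-1)]

lemma core (ν : Measure ℝ) [IsFiniteMeasure ν] (b C : ℝ) (hb : 1 < b) (hC : 0 < C)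
    (hAEP : MemAEP ν b C) (θ Λ : ℝ) (hθ : 0 < θ) (C' : ℝ) (h0 : 0 < C') (hC' : C' < C) :
    ∀ᶠ t in atTop, (ν.withDensity fun x => ENNReal.ofReal (Real.exp (θ * x - Λ))) (Set.Ioi t)
      ≤ ENNReal.ofReal (2 * Real.exp (θ * (t + 1) - Λ - C' * t ^ b)) := by
  obtain ⟨X₀, hX₀⟩ := eventually_atTop.1 (tail_ub ν b C hAEP C' hC')
  have hmono : Tendsto (fun t : ℝ => C' * t ^ (b - 1) - θ) atTop atTop := by
    apply Filter.tendsto_atTop_add_const_right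
    exact (tendsto_rpow_atTop (by linarith)).const_mul_atTop h0
  filter_upwards [eventually_ge_atTop (1:ℝ), eventually_ge_atTop X₀,
    hmono.eventually_ge_atTop 1] with t ht1 htX hts
  set f : ℝ → ENNReal := fun x => ENNReal.ofReal (Real.exp (θ * x - Λ)) with hf
  set A₀ : ℝ := θ * (t + 1) - Λ - C' * t ^ b with hA₀
  have hterm : ∀ n : ℕ, (ν.withDensity f) (Set.Ioc (t + n) (t + n + 1))
      ≤ ENNReal.ofReal (Real.exp A₀) * ENNReal.ofReal (Real.exp (-1)) ^ n := by
    intro n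
    have hmeas : MeasurableSet (Set.Ioc (t + (n:ℝ)) (t + n + 1)) := measurableSet_Ioc
    rw [withDensity_apply f hmeas]
    have hb1 : ∫⁻ x in Set.Ioc (t + (n:ℝ)) (t + n + 1), f x ∂ν
        ≤ ∫⁻ _ in Set.Ioc (t + (n:ℝ)) (t + n + 1),
            ENNReal.ofReal (Real.exp (θ * (t + n + 1) - Λ)) ∂ν := by
      apply setLIntegral_mono measurable_const
      intro x hx
      exact ENNReal.ofReal_le_ofReal (Real.exp_le_exp.2 (by nlinarith [hx.2]))
    rw [setLIntegral_const] at hb1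
    have hν : ν (Set.Ioc (t + (n:ℝ)) (t + n + 1)) ≤ ENNReal.ofReal (Real.exp (-C' * (t+n) ^ b)) := by
      refine le_trans (measure_mono Set.Ioc_subset_Ioi_self) (hX₀ (t+n) ?_)
      have : (0:ℝ) ≤ n := Nat.cast_nonneg n
      linarith
    refine le_trans hb1 ?_
    calc ENNReal.ofReal (Real.exp (θ * (t + n + 1) - Λ)) * ν (Set.Ioc (t + (n:ℝ)) (t + n + 1))
        ≤ ENNReal.ofReal (Real.exp (θ * (t + n + 1) - Λ)) *
            ENNReal.ofReal (Real.exp (-C' * (t+n) ^ b)) := by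
          exact mul_le_mul_right hν _
      _ = ENNReal.ofReal (Real.exp (θ * (t + n + 1) - Λ - C' * (t+n) ^ b)) := by
          rw [← ENNReal.ofReal_mul (Real.exp_nonneg _), ← Real.exp_add]; ring_nf
      _ ≤ ENNReal.ofReal (Real.exp (A₀ + n * (-1))) := by
          apply ENNReal.ofReal_le_ofReal
          apply Real.exp_le_exp.2
          exact exponent_bound b C' θ Λ t hb h0 ht1 hts n
      _ = ENNReal.ofReal (Real.exp A₀) * ENNReal.ofReal (Real.exp (-1)) ^ n := by
          rw [Real.exp_add, Real.exp_nat_mul, ENNReal.ofReal_mul (Real.exp_nonneg _),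
            ENNReal.ofReal_pow (Real.exp_nonneg _)]
  have hr : ENNReal.ofReal (Real.exp (-1)) ≤ 1/2 := by
    rw [show (1/2 : ENNReal) = ENNReal.ofReal (1/2) by rw [ENNReal.ofReal_div_of_pos] <;> norm_num]
    apply ENNReal.ofReal_le_ofReal
    rw [Real.exp_neg]
    rw [inv_le_comm₀ (Real.exp_pos 1) (by norm_num)]
    norm_num
    linarith [Real.exp_one_gt_d9]
  calc (ν.withDensity f) (Set.Ioi t)
      ≤ (ν.withDensity f) (⋃ n : ℕ, Set.Ioc (t + n) (t + n + 1)) :=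
        measure_mono (cover_Ioi t)
    _ ≤ ∑' n : ℕ, (ν.withDensity f) (Set.Ioc (t + n) (t + n + 1)) := measure_iUnion_le _
    _ ≤ ∑' n : ℕ, ENNReal.ofReal (Real.exp A₀) * ENNReal.ofReal (Real.exp (-1)) ^ n :=
        ENNReal.tsum_le_tsum hterm
    _ = ENNReal.ofReal (Real.exp A₀) * (1 - ENNReal.ofReal (Real.exp (-1)))⁻¹ := by
        rw [ENNReal.tsum_mul_left, ENNReal.tsum_geometric]
    _ ≤ ENNReal.ofReal (Real.exp A₀) * 2 := by
        apply mul_le_mul_right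
        have h12 : (1:ENNReal)/2 ≤ 1 - ENNReal.ofReal (Real.exp (-1)) := by
          apply ENNReal.le_sub_of_add_le_right (by simp : ENNReal.ofReal (Real.exp (-1)) ≠ ⊤)
          calc (1:ENNReal)/2 + ENNReal.ofReal (Real.exp (-1)) ≤ 1/2 + 1/2 :=
              add_le_add le_rfl hr
            _ = 1 := ENNReal.add_halves 1
        calc (1 - ENNReal.ofReal (Real.exp (-1)))⁻¹ ≤ ((1:ENNReal)/2)⁻¹ := by
              exact ENNReal.inv_le_inv' h12
          _ = 2 := by simp
    _ = ENNReal.ofReal (2 * Real.exp A₀) := by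
        rw [mul_comm, ENNReal.ofReal_mul (by norm_num), ENNReal.ofReal_ofNat]

lemma dens_meas (θ Λ : ℝ) : Measurable fun x : ℝ => ENNReal.ofReal (Real.exp (θ * x - Λ)) := by
  fun_prop

lemma tilt_univ_lt_top (ν : Measure ℝ) (θ Λ : ℝ) (hfin : mgf' ν θ < ⊤) :
    (ν.withDensity fun x => ENNReal.ofReal (Real.exp (θ * x - Λ))) Set.univ < ⊤ := by
  rw [withDensity_apply _ MeasurableSet.univ, Measure.restrict_univ]
  have : ∀ x : ℝ, ENNReal.ofReal (Real.exp (θ * x - Λ))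
      = ENNReal.ofReal (Real.exp (-Λ)) * ENNReal.ofReal (Real.exp (θ * x)) := by
    intro x
    rw [← ENNReal.ofReal_mul (Real.exp_nonneg _), ← Real.exp_add]
    ring_nf
  simp_rw [this]
  rw [lintegral_const_mul _ (by fun_prop)]
  exact ENNReal.mul_lt_top ENNReal.ofReal_lt_top hfin

lemma tilt_lower (ν : Measure ℝ) (θ Λ t : ℝ) (hθ : 0 < θ) :
    ENNReal.ofReal (Real.exp (θ * t - Λ)) * ν (Set.Ioi t)
      ≤ (ν.withDensity fun x => ENNReal.ofReal (Real.exp (θ * x - Λ))) (Set.Ioi t) := by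
  rw [withDensity_apply _ measurableSet_Ioi, ← setLIntegral_const]
  apply setLIntegral_mono (dens_meas θ Λ)
  intro x hx
  apply ENNReal.ofReal_le_ofReal
  apply Real.exp_le_exp.2
  have : t < x := hx
  nlinarith

lemma affine_div_rpow (b p q : ℝ) (hb : 1 < b) :
    Tendsto (fun t : ℝ => (p * t + q) / t ^ b) atTop (nhds 0) := by
  have h1 : Tendsto (fun t : ℝ => t ^ (1 - b)) atTop (nhds 0) := by
    have := tendsto_rpow_neg_atTop (show (0:ℝ) < b - 1 by linarith)
    simpa [neg_sub] using this
  have h2 : Tendsto (fun t : ℝ => t ^ (-b)) atTop (nhds 0) :=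
    tendsto_rpow_neg_atTop (by linarith)
  have h3 : Tendsto (fun t : ℝ => p * t ^ (1 - b) + q * t ^ (-b)) atTop (nhds (p * 0 + q * 0)) :=
    ((h1.const_mul p).add (h2.const_mul q))
  rw [show p * 0 + q * 0 = 0 by ring] at h3
  apply h3.congr'
  filter_upwards [eventually_gt_atTop (0:ℝ)] with t ht
  have e1 : t ^ (1 - b) = t * t ^ (-b) := by
    rw [show (1:ℝ) - b = 1 + -b by ring, Real.rpow_add ht, Real.rpow_one]
  rw [e1, Real.rpow_neg ht.le, div_eq_mul_inv]
  ring

/-- exponential tilting preserves the AEP(b,C) class when b > 1. -/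
theorem stmt17 (ν : Measure ℝ) (hprob : IsProbabilityMeasure ν)
    (b C : ℝ) (hb : 1 < b) (hC : 0 < C) (hAEP : MemAEP ν b C)
    (θ : ℝ) (hθ : 0 < θ) (hfin : mgf' ν θ < ⊤) :
    (∀ ε ∈ Set.Ioo (0 : ℝ) 1, ∃ T : ℝ, ∀ t ≥ T,
      (ν.withDensity fun x => ENNReal.ofReal (Real.exp (θ * x - cgf' ν θ)))
          (Set.Ioi t)
        ≤ ν (Set.Ioi ((1 - ε) * t))) ∧
    MemAEP (ν.withDensity fun x => ENNReal.ofReal (Real.exp (θ * x - cgf' ν θ))) b C := by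
  set Λ : ℝ := cgf' ν θ with hΛ
  set μθ : Measure ℝ := ν.withDensity fun x => ENNReal.ofReal (Real.exp (θ * x - Λ)) with hμθ
  have hμtop : ∀ t : ℝ, μθ (Set.Ioi t) ≠ ⊤ := fun t =>
    ((measure_mono (Set.subset_univ _)).trans_lt (tilt_univ_lt_top ν θ Λ hfin)).ne
  constructor
  · -- Part 1
    rintro ε ⟨hε0, hε1⟩
    set r : ℝ := (1 - ε) ^ b with hr
    have hr0 : 0 < r := Real.rpow_pos_of_pos (by linarith) b
    have hr1 : r < 1 := Real.rpow_lt_one (by linarith) (by linarith) (by linarith)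
    set C'' : ℝ := C * (1 + r) / (2 * r) with hC''def
    set C' : ℝ := C * (3 + r) / 4 with hC'def
    have hC'pos : 0 < C' := by rw [hC'def]; positivity
    have hC'C : C' < C := by rw [hC'def]; nlinarith
    have hCC'' : C < C'' := by
      rw [hC''def, lt_div_iff₀ (by linarith)]; nlinarith
    have hkey : C'' * r < C' := by
      rw [hC''def, hC'def, div_mul_eq_mul_div, div_lt_div_iff₀ (by linarith) (by norm_num)]
      nlinarith
    have h1 := core ν b C hb hC hAEP θ Λ hθ C' hC'pos hC'C
    have hcomp : Tendsto (fun t : ℝ => (1 - ε) * t) atTop atTop :=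
      tendsto_id.const_mul_atTop (by linarith)
    have h2 : ∀ᶠ t : ℝ in atTop,
        ENNReal.ofReal (Real.exp (-C'' * ((1 - ε) * t) ^ b)) ≤ ν (Set.Ioi ((1 - ε) * t)) :=
      (hcomp.eventually (tail_lb ν b C hC hAEP C'' hCC'')).mono fun t ht => ht.1
    have hd : 0 < C' - C'' * r := by linarith
    have hrp : Tendsto (fun t : ℝ => t ^ (b - 1)) atTop atTop :=
      tendsto_rpow_atTop (by linarith)
    have h3 : ∀ᶠ t : ℝ in atTop,
        2 * Real.exp (θ * (t + 1) - Λ - C' * t ^ b)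
          ≤ Real.exp (-C'' * ((1 - ε) * t) ^ b) := by
      filter_upwards [eventually_ge_atTop (1:ℝ),
        hrp.eventually_ge_atTop ((θ + 1) / (C' - C'' * r)),
        eventually_ge_atTop (θ + Real.log 2 - Λ)] with t ht1 ht2 ht3
      have ht0 : (0:ℝ) < t := by linarith
      have hrt : ((1 - ε) * t) ^ b = r * t ^ b := Real.mul_rpow (by linarith) ht0.le
      have htb : t ^ b = t ^ (b - 1) * t := by
        rw [show b = (b - 1) + 1 by ring, Real.rpow_add_one ht0.ne']; ring_nf
      have hdt : (θ + 1) ≤ (C' - C'' * r) * t ^ (b - 1) := by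
        rw [div_le_iff₀ hd] at ht2; nlinarith
      have hexp : Real.log 2 + (θ * (t + 1) - Λ - C' * t ^ b) ≤ -C'' * (r * t ^ b) := by
        have h5 : (θ + 1) * t ≤ (C' - C'' * r) * t ^ b := by
          rw [htb]; nlinarith
        nlinarith
      calc 2 * Real.exp (θ * (t + 1) - Λ - C' * t ^ b)
          = Real.exp (Real.log 2 + (θ * (t + 1) - Λ - C' * t ^ b)) := by
            rw [Real.exp_add, Real.exp_log (by norm_num)]
        _ ≤ Real.exp (-C'' * ((1 - ε) * t) ^ b) := by
            rw [hrt]; exact Real.exp_le_exp.2 hexp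
    have hall : ∀ᶠ t : ℝ in atTop, μθ (Set.Ioi t) ≤ ν (Set.Ioi ((1 - ε) * t)) := by
      filter_upwards [h1, h2, h3] with t ha hb' hc
      calc μθ (Set.Ioi t) ≤ ENNReal.ofReal (2 * Real.exp (θ * (t + 1) - Λ - C' * t ^ b)) := ha
        _ ≤ ENNReal.ofReal (Real.exp (-C'' * ((1 - ε) * t) ^ b)) := ENNReal.ofReal_le_ofReal hc
        _ ≤ ν (Set.Ioi ((1 - ε) * t)) := hb'
    obtain ⟨T, hT⟩ := eventually_atTop.1 hall
    exact ⟨T, hT⟩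
  · -- Part 2
    have hlb : ∀ᶠ t : ℝ in atTop,
        Real.exp (θ * t - Λ) * survival ν t ≤ survival μθ t ∧ 0 < survival ν t
          ∧ 0 < survival μθ t ∧ 1 ≤ t := by
      filter_upwards [tail_lb ν b C hC hAEP (C + 1) (by linarith),
        eventually_ge_atTop (1:ℝ)] with t ht ht1
      have hsurvpos : 0 < survival ν t := ht.2
      have hlow := tilt_lower ν θ Λ t hθ
      have h6 : Real.exp (θ * t - Λ) * survival ν t ≤ survival μθ t := by
        have := ENNReal.toReal_mono (hμtop t) hlow
        rwa [ENNReal.toReal_mul, ENNReal.toReal_ofReal (Real.exp_nonneg _)] at this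
      refine ⟨h6, hsurvpos, lt_of_lt_of_le (by positivity) h6, ht1⟩
    rw [MemAEP]
    rw [tendsto_order]
    constructor
    · -- lower bound side
      intro c hc
      have hA : Tendsto (fun t : ℝ => (θ * t + -Λ) / t ^ b + Real.log (survival ν t) / t ^ b)
          atTop (nhds (0 + -C)) := (affine_div_rpow b θ (-Λ) hb).add hAEP
      rw [zero_add] at hA
      filter_upwards [hlb, hA.eventually_const_lt hc] with t ⟨h6, hν, hμ, ht1⟩ hgt
      have ht0 : (0:ℝ) < t := by linarith
      have htb : (0:ℝ) < t ^ b := Real.rpow_pos_of_pos ht0 b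
      have hlog : (θ * t - Λ) + Real.log (survival ν t) ≤ Real.log (survival μθ t) := by
        have := Real.log_le_log (by positivity) h6
        rwa [Real.log_mul (Real.exp_ne_zero _) hν.ne', Real.log_exp] at this
      have : (θ * t + -Λ) / t ^ b + Real.log (survival ν t) / t ^ b
          ≤ Real.log (survival μθ t) / t ^ b := by
        rw [← add_div]
        apply div_le_div_of_nonneg_right ?_ htb.le
        · linarith
      linarith
    · -- upper bound side
      intro c hc
      set C' : ℝ := max (C / 2) ((C - c) / 2) with hC'def
      have hC'pos : 0 < C' := lt_max_of_lt_left (by linarith)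
      have hC'C : C' < C := max_lt (by linarith) (by linarith)
      have hC'c : -C' < c := by
        rcases le_or_gt 0 c with h | h
        · have : C / 2 ≤ C' := le_max_left _ _
          linarith
        · have : (C - c) / 2 ≤ C' := le_max_right _ _
          linarith
      have hcore := core ν b C hb hC hAEP θ Λ hθ C' hC'pos hC'C
      have hA : Tendsto (fun t : ℝ => (θ * t + (Real.log 2 + θ - Λ)) / t ^ b + -C')
          atTop (nhds (0 + -C')) := (affine_div_rpow b θ _ hb).add_const _
      rw [zero_add] at hA
      filter_upwards [hlb, hcore, hA.eventually_lt_const hC'c] with t ⟨h6, hν, hμ, ht1⟩ hc2 hlt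
      have ht0 : (0:ℝ) < t := by linarith
      have htb : (0:ℝ) < t ^ b := Real.rpow_pos_of_pos ht0 b
      have hsurv_le : survival μθ t ≤ 2 * Real.exp (θ * (t + 1) - Λ - C' * t ^ b) := by
        have := ENNReal.toReal_mono ENNReal.ofReal_ne_top hc2
        rwa [ENNReal.toReal_ofReal (by positivity)] at this
      have hlog : Real.log (survival μθ t) ≤ Real.log 2 + (θ * (t + 1) - Λ - C' * t ^ b) := by
        have := Real.log_le_log hμ hsurv_le
        rwa [Real.log_mul (by norm_num) (Real.exp_ne_zero _), Real.log_exp] at this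
      have hnum : Real.log 2 + (θ * (t + 1) - Λ - C' * t ^ b)
          = (θ * t + (Real.log 2 + θ - Λ)) + (-C') * t ^ b := by ring
      have hstep : Real.log (survival μθ t) / t ^ b
          ≤ (θ * t + (Real.log 2 + θ - Λ)) / t ^ b + -C' := by
        have h7 : Real.log (survival μθ t) / t ^ b
            ≤ ((θ * t + (Real.log 2 + θ - Λ)) + (-C') * t ^ b) / t ^ b := by
          apply div_le_div_of_nonneg_right ?_ htb.le
          rw [← hnum]; exact hlog
        rwa [add_div, mul_div_assoc, div_self htb.ne', mul_one] at h7
      linarith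
end
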